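/- arXiv:2402.12645 — 7 statements merged into one kernel-verified Lean document; each statement's English description precedes it below -/
import Mathlib

section
/- Let π^start, π^goal ∈ {0,1}^ℓ and suppose there is a sequence (π^(1),…,π^(T)) of strings in {0,1}^ℓ with π^(1) = π^start, π^(T) = π^goal, consecutive strings differing in at most one bit, such that every π^(t) is accepted by every R ∈ {0,1}^r. Then there exists a reconfiguration partial assignment sequence for the FGLSS constraint graph G from f_{π^start} to f_{π^goal} in which every partial assignment satisfies G and assigns a value (≠ ⊥) to every vertex, i.e., has size 2^r. -/
open Finset

namespace FGLSS

variable {ℓ r q : ℕ}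

/-- An alphabet symbol: a nonempty subset of `{0,1}`. -/
abbrev Sym : Type := {s : Finset Bool // s.Nonempty}

/-- A value for a vertex `R`: a tuple in `{{0},{1},{0,1}}^{I_R}`. -/
abbrev Val (I : Finset (Fin ℓ)) : Type := {i : Fin ℓ // i ∈ I} → Sym

/-- A partial assignment for the FGLSS constraint graph: each vertex `R ∈ {0,1}^r`
gets either `⊥` (i.e. `none`) or a value in `{{0},{1},{0,1}}^{I_R}`. -/
abbrev PAssign (I : (Fin r → Bool) → Finset (Fin ℓ)) : Type :=
  (R : Fin r → Bool) → Option (Val (I R))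

variable (I : (Fin r → Bool) → Finset (Fin ℓ))
variable (D : (R : Fin r → Bool) → ({i : Fin ℓ // i ∈ I R} → Bool) → Bool)

/-- `R` accepts the proof `π`, i.e. `D_R(π|_{I_R}) = 1`. -/
def Accepts (π : Fin ℓ → Bool) (R : Fin r → Bool) : Prop :=
  D R (fun i => π i.1) = true

/-- The FGLSS constraint on the edge `(R₁, R₂)` is satisfied by the values `g₁, g₂`. -/
def EdgeSat (R₁ R₂ : Fin r → Bool) (g₁ : Val (I R₁)) (g₂ : Val (I R₂)) : Prop :=
  (∀ α : {i : Fin ℓ // i ∈ I R₁} → Bool, (∀ i, α i ∈ (g₁ i).1) → D R₁ α = true) ∧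
  (∀ β : {i : Fin ℓ // i ∈ I R₂} → Bool, (∀ i, β i ∈ (g₂ i).1) → D R₂ β = true) ∧
  (∀ (i : Fin ℓ) (h₁ : i ∈ I R₁) (h₂ : i ∈ I R₂),
    (g₁ ⟨i, h₁⟩).1 ⊆ (g₂ ⟨i, h₂⟩).1 ∨ (g₂ ⟨i, h₂⟩).1 ⊆ (g₁ ⟨i, h₁⟩).1)

/-- A partial assignment satisfies the FGLSS constraint graph `G`: every edge
(i.e. every pair `(R₁, R₂)` with `I_{R₁} ∩ I_{R₂} ≠ ∅`) both of whose endpoints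
are assigned is satisfied. -/
def Sat (f : PAssign I) : Prop :=
  ∀ R₁ R₂ : Fin r → Bool, (I R₁ ∩ I R₂).Nonempty →
    ∀ g₁ g₂, f R₁ = some g₁ → f R₂ = some g₂ → EdgeSat I D R₁ R₂ g₁ g₂

/-- The size `‖f‖` of a partial assignment: the number of assigned vertices. -/
noncomputable def psize (f : PAssign I) : ℕ := {R | f R ≠ none}.ncard

/-- The induced assignment `f_π` of a proof `π`. -/
def indAssign (π : Fin ℓ → Bool) : PAssign I :=
  fun _R => some fun i => ⟨{π i.1}, Finset.singleton_nonempty _⟩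

end FGLSS

section AuxReconf

open FGLSS

variable {ℓ r q : ℕ}
variable (I : (Fin r → Bool) → Finset (Fin ℓ))
variable (D : (R : Fin r → Bool) → ({i : Fin ℓ // i ∈ I R} → Bool) → Bool)

/-- Reachability by a reconfiguration sequence of full-size satisfying assignments. -/
def Reach (f g : PAssign I) : Prop :=
  ∃ (N : ℕ) (F : ℕ → PAssign I),
    F 0 = f ∧ F N = g ∧
    (∀ t ≤ N, Sat I D (F t) ∧ psize I (F t) = 2 ^ r) ∧
    (∀ t < N, {R : Fin r → Bool | F t R ≠ F (t + 1) R}.ncard ≤ 1)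

lemma psize_all (f : PAssign I) (h : ∀ R, f R ≠ none) : psize I f = 2 ^ r := by
  have hu : {R | f R ≠ none} = Set.univ := Set.eq_univ_of_forall h
  rw [psize, hu, Set.ncard_univ, Nat.card_eq_fintype_card]
  simp

lemma Reach.trans {f g h : PAssign I} (h1 : Reach I D f g) (h2 : Reach I D g h) :
    Reach I D f h := by
  obtain ⟨N₁, F₁, e01, e1N, s1, d1⟩ := h1
  obtain ⟨N₂, F₂, e02, e2N, s2, d2⟩ := h2
  refine ⟨N₁ + N₂, fun s => if s ≤ N₁ then F₁ s else F₂ (s - N₁), ?_, ?_, ?_, ?_⟩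
  · simp [e01]
  · rcases Nat.eq_zero_or_pos N₂ with h0 | h0
    · subst h0
      simp only [Nat.add_zero, le_refl, if_true]
      rw [e1N, ← e02]
      exact e2N
    · have : ¬ (N₁ + N₂ ≤ N₁) := by omega
      simp [this, e2N]
  · intro t ht
    by_cases htt : t ≤ N₁
    · simpa [htt] using s1 t htt
    · have : t - N₁ ≤ N₂ := by omega
      simpa [htt] using s2 (t - N₁) this
  · intro t ht
    by_cases htt : t + 1 ≤ N₁
    · have h' : t ≤ N₁ := by omega
      simpa [htt, h'] using d1 t (by omega)
    · by_cases ht1 : t ≤ N₁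
      · -- t = N₁, boundary step
        have hteq : t = N₁ := by omega
        subst hteq
        have hb : F₁ t = F₂ 0 := e1N.trans e02.symm
        have h2' : ¬ (t + 1 ≤ t) := by omega
        have ht1 : t + 1 - t = 1 := by omega
        simp only [le_refl, if_true, h2', if_false, ht1, hb]
        simpa using d2 0 (by omega)
      · have h1' : ¬ (t + 1 ≤ N₁) := by omega
        have heq : t + 1 - N₁ = (t - N₁) + 1 := by omega
        simp only [ht1, h1', if_false, heq]
        exact d2 (t - N₁) (by omega)

/-- Singleton value induced by a proof. -/
def sVal (π : Fin ℓ → Bool) (R : Fin r → Bool) : Val (I R) :=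
  fun i => ⟨{π i.1}, Finset.singleton_nonempty _⟩

/-- "Wildcard" value merging two proofs. -/
def mVal (π π' : Fin ℓ → Bool) (R : Fin r → Bool) : Val (I R) :=
  fun i => ⟨{π i.1, π' i.1}, Finset.insert_nonempty _ _⟩

lemma sVal_accept (π : Fin ℓ → Bool) (hπ : ∀ R, Accepts I D π R) (R : Fin r → Bool) :
    ∀ α : {i : Fin ℓ // i ∈ I R} → Bool, (∀ i, α i ∈ ((sVal I π R) i).1) → D R α = true := by
  intro α hα
  have : α = fun i => π i.1 := funext fun i => by simpa [sVal] using hα i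
  rw [this]; exact hπ R

lemma mVal_accept (π π' : Fin ℓ → Bool)
    (hsub : {i : Fin ℓ | π i ≠ π' i}.Subsingleton)
    (hπ : ∀ R, Accepts I D π R) (hπ' : ∀ R, Accepts I D π' R) (R : Fin r → Bool) :
    ∀ α : {i : Fin ℓ // i ∈ I R} → Bool, (∀ i, α i ∈ ((mVal I π π' R) i).1) → D R α = true := by
  intro α hα
  by_cases hc : ∀ i, α i = π i.1
  · have : α = fun i => π i.1 := funext hc
    rw [this]; exact hπ R
  · push_neg at hc
    obtain ⟨j₀, hj₀⟩ := hc
    have hj₀' : α j₀ = π' j₀.1 := by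
      have := hα j₀
      simp [mVal] at this
      tauto
    have hne : π j₀.1 ≠ π' j₀.1 := fun h => hj₀ (by rw [hj₀', ← h])
    have : α = fun i => π' i.1 := by
      funext j
      by_cases hj : π j.1 = π' j.1
      · have := hα j
        simp [mVal] at this
        rcases this with h | h
        · rw [h, hj]
        · rw [h]
      · have hji : j.1 = j₀.1 := hsub hj hne
        have : j = j₀ := Subtype.ext hji
        rw [this, hj₀']
    rw [this]; exact hπ' R

lemma ncard_le_one_of_subsingleton {α : Type*} {s : Set α} (h : s.Subsingleton) :
    s.ncard ≤ 1 := by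
  rcases h.eq_empty_or_singleton with rfl | ⟨a, rfl⟩ <;> simp

lemma subsingleton_of_ncard_le_one {α : Type*} {s : Set α} (hfin : s.Finite)
    (h : s.ncard ≤ 1) : s.Subsingleton := by
  intro a ha b hb
  by_contra hab
  have hsub : ({a, b} : Set α) ⊆ s := by
    intro x hx; rcases hx with rfl | rfl
    · exact ha
    · exact hb
  have h2 : ({a, b} : Set α).ncard = 2 := Set.ncard_pair hab
  have := Set.ncard_le_ncard hsub hfin
  omega

lemma step_reach (π π' : Fin ℓ → Bool)
    (hd : {i : Fin ℓ | π i ≠ π' i}.ncard ≤ 1)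
    (hπ : ∀ R, Accepts I D π R) (hπ' : ∀ R, Accepts I D π' R) :
    Reach I D (indAssign I π) (indAssign I π') := by
  classical
  have hsub : {i : Fin ℓ | π i ≠ π' i}.Subsingleton :=
    subsingleton_of_ncard_le_one (Set.toFinite _) hd
  set N := Fintype.card (Fin r → Bool) with hN
  set e := Fintype.equivFin (Fin r → Bool) with he
  set G : ℕ → PAssign I := fun k R =>
    some (if k ≤ (e R : ℕ) then sVal I π R
          else if k ≤ (e R : ℕ) + N then mVal I π π' R
          else sVal I π' R) with hG
  refine ⟨2 * N, G, ?_, ?_, ?_, ?_⟩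
  · funext R
    have h0 : (0:ℕ) ≤ (e R : ℕ) := Nat.zero_le _
    simp only [hG, h0, if_true, if_pos]
    rfl
  · funext R
    have hb : ((e R : ℕ)) < N := (e R).isLt
    have h1 : ¬ (2 * N ≤ (e R : ℕ)) := by omega
    have h2 : ¬ (2 * N ≤ (e R : ℕ) + N) := by omega
    simp only [hG, h1, h2, if_false]
    rfl
  · intro k _
    constructor
    · intro R₁ R₂ _ g₁ g₂ h₁ h₂
      simp only [hG, Option.some_inj] at h₁ h₂
      refine ⟨?_, ?_, ?_⟩
      · subst h₁
        split_ifs with c1 c2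
        · exact sVal_accept I D π hπ R₁
        · exact mVal_accept I D π π' hsub hπ hπ' R₁
        · exact sVal_accept I D π' hπ' R₁
      · subst h₂
        split_ifs with c1 c2
        · exact sVal_accept I D π hπ R₂
        · exact mVal_accept I D π π' hsub hπ hπ' R₂
        · exact sVal_accept I D π' hπ' R₂
      · intro i hi₁ hi₂
        subst h₁; subst h₂
        have hb₁ : ((e R₁ : ℕ)) < N := (e R₁).isLt
        have hb₂ : ((e R₂ : ℕ)) < N := (e R₂).isLt
        split_ifs <;> simp only [sVal, mVal] <;>
          first
          | omega
          | exact Or.inl subset_rfl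
          | exact Or.inl (Finset.singleton_subset_iff.mpr (by simp))
          | exact Or.inr (Finset.singleton_subset_iff.mpr (by simp))
    · apply psize_all
      intro R
      simp [hG]
  · intro k _
    have hss : {R : Fin r → Bool | G k R ≠ G (k + 1) R}.Subsingleton := by
      have hsubset : {R : Fin r → Bool | G k R ≠ G (k + 1) R} ⊆
          {R : Fin r → Bool | (e R : ℕ) = k ∨ (e R : ℕ) + N = k} := by
        intro R hR
        by_contra hcon
        simp only [Set.mem_setOf_eq, not_or] at hcon
        obtain ⟨hc1, hc2⟩ := hcon
        apply hR
        simp only [hG]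
        have i1 : (k ≤ (e R : ℕ)) ↔ (k + 1 ≤ (e R : ℕ)) := by omega
        have i2 : (k ≤ (e R : ℕ) + N) ↔ (k + 1 ≤ (e R : ℕ) + N) := by omega
        simp only [i1, i2]
      intro a ha b hb
      have ha' := hsubset ha
      have hb' := hsubset hb
      simp only [Set.mem_setOf_eq] at ha' hb'
      have hba := (e a).isLt
      have hbb := (e b).isLt
      have : (e a : ℕ) = (e b : ℕ) := by omega
      exact e.injective (Fin.ext this)
    exact ncard_le_one_of_subsingleton hss

end AuxReconf

open FGLSS in
/-- If there is a sequence of proofs from `π^start` to `π^goal`, consecutive ones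
differing in at most one bit, each accepted by every `R ∈ {0,1}^r`, then there is a
reconfiguration partial assignment sequence for the FGLSS constraint graph `G` from
`f_{π^start}` to `f_{π^goal}` in which every partial assignment satisfies `G` and has
size `2^r` (every vertex is assigned). -/
theorem stmt_1 {ℓ r q : ℕ} (hℓ : 0 < ℓ) (hr : 0 < r) (hq : 0 < q)
    (I : (Fin r → Bool) → Finset (Fin ℓ)) (hI : ∀ R, (I R).card = q)
    (D : (R : Fin r → Bool) → ({i : Fin ℓ // i ∈ I R} → Bool) → Bool)
    (πstart πgoal : Fin ℓ → Bool)
    (T : ℕ) (π : ℕ → Fin ℓ → Bool)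
    (h0 : π 0 = πstart) (hT : π T = πgoal)
    (hstep : ∀ t < T, {i : Fin ℓ | π t i ≠ π (t + 1) i}.ncard ≤ 1)
    (hacc : ∀ t ≤ T, ∀ R : Fin r → Bool, Accepts I D (π t) R) :
    ∃ (T' : ℕ) (F : ℕ → PAssign I),
      F 0 = indAssign I πstart ∧ F T' = indAssign I πgoal ∧
      (∀ t ≤ T', Sat I D (F t) ∧ psize I (F t) = 2 ^ r) ∧
      (∀ t < T', {R : Fin r → Bool | F t R ≠ F (t + 1) R}.ncard ≤ 1) := by
  have key : ∀ t ≤ T, Reach I D (indAssign I (π 0)) (indAssign I (π t)) := by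
    intro t
    induction t with
    | zero =>
      intro _
      exact step_reach I D (π 0) (π 0) (by simp) (hacc 0 (Nat.zero_le _)) (hacc 0 (Nat.zero_le _))
    | succ n ih =>
      intro hn
      exact Reach.trans I D (ih (by omega))
        (step_reach I D (π n) (π (n+1)) (hstep n (by omega))
          (hacc n (by omega)) (hacc (n+1) hn))
  have := key T le_rfl
  rw [h0, hT] at this
  exact this
end

section
/- Let f be a partial assignment satisfying the FGLSS constraint graph G, and let π ∈ {0,1}^ℓ be the plurality proof of f. Then for every R ∈ {0,1}^r with f(R) ≠ ⊥, we have π_i ∈ f(R)_i for every i ∈ I_R, and consequently D_R(π|_{I_R}) = 1. -/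
open Finset

namespace FGLSS

open Classical in
/-- The plurality proof of a partial assignment `f`: position `i` is `1` iff strictly
more vertices `R` with `f(R) ≠ ⊥` and `i ∈ I_R` have `1 ∈ f(R)_i` than have
`0 ∈ f(R)_i`, and `0` otherwise. -/
noncomputable def plurality {ℓ r : ℕ} (I : (Fin r → Bool) → Finset (Fin ℓ))
    (f : PAssign I) : Fin ℓ → Bool := fun i =>
  if {R : Fin r → Bool | ∃ h : i ∈ I R, ∃ g, f R = some g ∧ false ∈ (g ⟨i, h⟩).1}.ncard
      < {R : Fin r → Bool | ∃ h : i ∈ I R, ∃ g, f R = some g ∧ true ∈ (g ⟨i, h⟩).1}.ncard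
  then true else false

end FGLSS

open FGLSS in
/-- Let `f` be a partial assignment satisfying the FGLSS constraint graph `G`, and
let `π` be its plurality proof. Then for every `R` with `f(R) ≠ ⊥` we have
`π_i ∈ f(R)_i` for every `i ∈ I_R`, and consequently `D_R(π|_{I_R}) = 1`. -/
theorem stmt_2 {ℓ r q : ℕ} (hℓ : 0 < ℓ) (hr : 0 < r) (hq : 0 < q)
    (I : (Fin r → Bool) → Finset (Fin ℓ)) (hI : ∀ R, (I R).card = q)
    (D : (R : Fin r → Bool) → ({i : Fin ℓ // i ∈ I R} → Bool) → Bool)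
    (f : PAssign I) (hf : Sat I D f) :
    ∀ (R : Fin r → Bool) (g : Val (I R)), f R = some g →
      (∀ (i : Fin ℓ) (h : i ∈ I R), plurality I f i ∈ (g ⟨i, h⟩).1) ∧
      Accepts I D (plurality I f) R := by
  intro R g hg
  have hne : (I R ∩ I R).Nonempty := by
    rw [Finset.inter_self]
    exact Finset.card_pos.mp (by rw [hI]; exact hq)
  obtain ⟨hD, -, -⟩ := hf R R hne g g hg hg
  have key : ∀ (i : Fin ℓ) (h : i ∈ I R), plurality I f i ∈ (g ⟨i, h⟩).1 := by
    intro i h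
    by_cases hboth : (g ⟨i, h⟩).1 = {false, true}
    · rw [hboth]
      cases plurality I f i <;> decide
    · have hsing : ∃ b, (g ⟨i, h⟩).1 = {b} := by
        have : ∀ s : Finset Bool, s.Nonempty → s ≠ {false, true} →
            s = {false} ∨ s = {true} := by decide
        rcases this _ (g ⟨i, h⟩).2 hboth with h' | h'
        · exact ⟨false, h'⟩
        · exact ⟨true, h'⟩
      obtain ⟨b, hb⟩ := hsing
      have hall : ∀ (R' : Fin r → Bool) (h' : i ∈ I R') g', f R' = some g' →
          b ∈ (g' ⟨i, h'⟩).1 := by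
        intro R' h' g' hg'
        obtain ⟨-, -, hsub⟩ := hf R R' ⟨i, Finset.mem_inter.mpr ⟨h, h'⟩⟩ g g' hg hg'
        rcases hsub i h h' with hs | hs
        · exact hs (by rw [hb]; exact Finset.mem_singleton_self b)
        · obtain ⟨c, hc⟩ := (g' ⟨i, h'⟩).2
          have := hs hc
          rw [hb, Finset.mem_singleton] at this
          rwa [this] at hc
      have hnotb : ¬ (!b) ∈ (g ⟨i, h⟩).1 := by
        rw [hb, Finset.mem_singleton]; cases b <;> decide
      have hss : {R' : Fin r → Bool | ∃ h' : i ∈ I R', ∃ g', f R' = some g' ∧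
            (!b) ∈ (g' ⟨i, h'⟩).1}
          ⊂ {R' : Fin r → Bool | ∃ h' : i ∈ I R', ∃ g', f R' = some g' ∧
            b ∈ (g' ⟨i, h'⟩).1} := by
        constructor
        · rintro R' ⟨h', g', hg', -⟩
          exact ⟨h', g', hg', hall R' h' g' hg'⟩
        · intro hsub
          have hRmem : R ∈ {R' : Fin r → Bool | ∃ h' : i ∈ I R', ∃ g', f R' = some g' ∧
              b ∈ (g' ⟨i, h'⟩).1} := ⟨h, g, hg, hall R h g hg⟩
          obtain ⟨h', g', hg', hmem⟩ := hsub hRmem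
          rw [hg] at hg'
          cases hg'
          exact hnotb hmem
      have hlt := Set.ncard_lt_ncard hss (Set.toFinite _)
      have : plurality I f i = b := by
        cases b with
        | true =>
          simp only [Bool.not_true] at hlt
          unfold plurality
          rw [if_pos hlt]
        | false =>
          simp only [Bool.not_false] at hlt
          unfold plurality
          exact if_neg (Nat.lt_asymm hlt)
      rw [this, hb]
      exact Finset.mem_singleton_self b
  refine ⟨key, ?_⟩
  exact hD _ (fun i => key i.1 i.2)
end

section
/- Suppose deg(i) ≤ D for every position i ∈ {1,…,ℓ}, and let π^start, π^goal ∈ {0,1}^ℓ each be accepted by every R ∈ {0,1}^r. Let Γ ∈ ℝ. If there exists a reconfiguration partial assignment sequence for the FGLSS constraint graph G from f_{π^start} to f_{π^goal} in which every partial assignment has size at least Γ·2^r, then there exists a sequence (π^(1),…,π^(T)) of strings in {0,1}^ℓ with π^(1) = π^start, π^(T) = π^goal, consecutive strings differing in at most one bit, such that for every t, |{R ∈ {0,1}^r : D_R(π^(t)|_{I_R}) = 1}| ≥ Γ·2^r − q·D. -/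
open Finset

section FGLSSAuxSec

open FGLSS

open FGLSS

variable {ℓ r q : ℕ}
variable (I : (Fin r → Bool) → Finset (Fin ℓ))
variable (D : (R : Fin r → Bool) → ({i : Fin ℓ // i ∈ I R} → Bool) → Bool)

/-- `f` pins position `i` to value `b`. -/
def DefAt (f : PAssign I) (i : Fin ℓ) (b : Bool) : Prop :=
  ∃ (R : Fin r → Bool) (g : Val (I R)) (hi : i ∈ I R), f R = some g ∧ (g ⟨i, hi⟩).1 = {b}

open scoped Classical in
/-- Rounding of a partial assignment to a string, with fallback `π0`. -/
noncomputable def rnd (π0 : Fin ℓ → Bool) (f : PAssign I) (i : Fin ℓ) : Bool :=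
  if h : ∃ b, DefAt I f i b then h.choose else π0 i

variable {I D}

lemma defAt_unique {f : PAssign I} (hsat : Sat I D f) {i : Fin ℓ} {b b' : Bool}
    (h : DefAt I f i b) (h' : DefAt I f i b') : b = b' := by
  obtain ⟨R, g, hi, hf, hs⟩ := h
  obtain ⟨R', g', hi', hf', hs'⟩ := h'
  obtain ⟨-, -, hcmp⟩ := hsat R R' ⟨i, Finset.mem_inter.2 ⟨hi, hi'⟩⟩ g g' hf hf'
  rcases hcmp i hi hi' with hc | hc <;> rw [hs, hs'] at hc
  · simpa using hc (Finset.mem_singleton_self b)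
  · simpa [eq_comm] using hc (Finset.mem_singleton_self b')

lemma mem_of_defAt {f : PAssign I} (hsat : Sat I D f) {i : Fin ℓ} {b : Bool}
    (h : DefAt I f i b) {R : Fin r → Bool} {g : Val (I R)} (hf : f R = some g)
    (hi : i ∈ I R) : b ∈ (g ⟨i, hi⟩).1 := by
  obtain ⟨R', g', hi', hf', hs'⟩ := h
  obtain ⟨-, -, hcmp⟩ := hsat R R' ⟨i, Finset.mem_inter.2 ⟨hi, hi'⟩⟩ g g' hf hf'
  rcases hcmp i hi hi' with hc | hc <;> rw [hs'] at hc
  · obtain ⟨x, hx⟩ := (g ⟨i, hi⟩).2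
    have := hc hx
    simp at this
    exact this ▸ hx
  · exact hc (Finset.mem_singleton_self b)

lemma rnd_mem {f : PAssign I} (hsat : Sat I D f) (π0 : Fin ℓ → Bool)
    {R : Fin r → Bool} {g : Val (I R)} (hf : f R = some g)
    {i : Fin ℓ} (hi : i ∈ I R) : rnd I π0 f i ∈ (g ⟨i, hi⟩).1 := by
  rw [rnd]
  split
  · next h => exact mem_of_defAt hsat h.choose_spec hf hi
  · next h =>
    by_contra hx
    apply h
    refine ⟨!(π0 i), R, g, hi, hf, ?_⟩
    ext y
    simp only [Finset.mem_singleton]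
    constructor
    · intro hy
      cases y <;> cases hb : π0 i <;> simp_all
    · rintro rfl
      obtain ⟨z, hz⟩ := (g ⟨i, hi⟩).2
      have : z ≠ π0 i := fun h' => hx (h' ▸ hz)
      cases z <;> cases hb : π0 i <;> simp_all

lemma accepts_of_mem {f : PAssign I} (hsat : Sat I D f) (hq : ∀ R, (I R).Nonempty)
    {R : Fin r → Bool} {g : Val (I R)} (hf : f R = some g)
    (π : Fin ℓ → Bool) (hmem : ∀ (i : Fin ℓ) (hi : i ∈ I R), π i ∈ (g ⟨i, hi⟩).1) :
    Accepts I D π R := by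
  obtain ⟨h1, -, -⟩ := hsat R R (by simpa using hq R) g g hf hf
  exact h1 (fun i => π i.1) (fun i => hmem i.1 i.2)

lemma defAt_ind {π : Fin ℓ → Bool} {i : Fin ℓ} {b : Bool}
    (h : DefAt I (indAssign I π) i b) : b = π i := by
  obtain ⟨R, g, hi, hf, hs⟩ := h
  simp only [indAssign, Option.some_inj] at hf
  subst hf
  simpa [eq_comm] using hs

lemma rnd_ind_self (π : Fin ℓ → Bool) (i : Fin ℓ) :
    rnd I π (indAssign I π) i = π i := by
  rw [rnd]
  split
  · next h => exact defAt_ind h.choose_spec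
  · rfl

lemma rnd_ind (π0 π : Fin ℓ → Bool) {i : Fin ℓ} {R : Fin r → Bool} (hi : i ∈ I R) :
    rnd I π0 (indAssign I π) i = π i := by
  rw [rnd, dif_pos ⟨π i, R, _, hi, rfl, rfl⟩]
  exact defAt_ind (Exists.choose_spec _)

lemma rnd_eq_of_agree {f f' : PAssign I} (hsat' : Sat I D f') (π0 : Fin ℓ → Bool)
    {R₀ : Fin r → Bool} (hag : ∀ R ≠ R₀, f R = f' R) {i : Fin ℓ} (hi : i ∉ I R₀) :
    rnd I π0 f i = rnd I π0 f' i := by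
  classical
  have key : ∀ b, DefAt I f i b ↔ DefAt I f' i b := by
    intro b
    constructor <;> rintro ⟨R, g, hiR, hf, hs⟩ <;>
    · have hne : R ≠ R₀ := fun h => hi (h ▸ hiR)
      exact ⟨R, g, hiR, by rw [← hag R hne] at *; exact hf, hs⟩
  rw [rnd, rnd]
  split
  · next h =>
    have h' : ∃ b, DefAt I f' i b := ⟨h.choose, (key _).1 h.choose_spec⟩
    rw [dif_pos h']
    exact defAt_unique hsat' ((key _).1 h.choose_spec) h'.choose_spec
  · next h =>
    rw [dif_neg]
    intro ⟨b, hb⟩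
    exact h ⟨b, (key b).2 hb⟩



open FGLSS

variable {ℓ r q : ℕ}
variable {I : (Fin r → Bool) → Finset (Fin ℓ)}
variable {D : (R : Fin r → Bool) → ({i : Fin ℓ // i ∈ I R} → Bool) → Bool}

lemma exists_pivot {f f' : PAssign I}
    (h : {R : Fin r → Bool | f R ≠ f' R}.ncard ≤ 1) :
    ∃ R₀, ∀ R ≠ R₀, f R = f' R := by
  rcases Set.eq_empty_or_nonempty {R | f R ≠ f' R} with he | ⟨R₀, hR₀⟩
  · refine ⟨fun _ => false, fun R _ => ?_⟩
    by_contra hne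
    exact (he ▸ hne : R ∈ (∅ : Set (Fin r → Bool)))
  · refine ⟨R₀, fun R hRne => ?_⟩
    by_contra hx
    exact hRne ((Set.ncard_le_one_iff (Set.toFinite _)).1 h hx hR₀)

noncomputable def seqG {ℓ r : ℕ} (I : (Fin r → Bool) → Finset (Fin ℓ))
    (πstart πgoal : Fin ℓ → Bool) (F : ℕ → PAssign I) (T : ℕ) :
    ℕ → Fin ℓ → Bool :=
  fun t i => if t ≤ T then rnd I πstart (F t) i else πgoal i

noncomputable def seqP {ℓ r : ℕ} (I : (Fin r → Bool) → Finset (Fin ℓ))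
    (πstart πgoal : Fin ℓ → Bool) (F : ℕ → PAssign I) (T : ℕ) :
    ℕ → Fin ℓ → Bool :=
  fun n i => if i.val < n % ℓ then seqG I πstart πgoal F T (n / ℓ + 1) i
    else seqG I πstart πgoal F T (n / ℓ) i


end FGLSSAuxSec

open FGLSS in
/-- Suppose every position has degree at most `D₀` and `π^start, π^goal` are accepted by
every `R ∈ {0,1}^r`. If there is a reconfiguration partial assignment sequence for the
FGLSS constraint graph `G` from `f_{π^start}` to `f_{π^goal}` in which every partial
assignment has size at least `Γ·2^r`, then there is a sequence of proofs from `π^start`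
to `π^goal`, consecutive ones differing in at most one bit, each accepted by at least
`Γ·2^r − q·D₀` of the `R ∈ {0,1}^r`. -/
theorem stmt_4 {ℓ r q : ℕ} (hℓ : 0 < ℓ) (hr : 0 < r) (hq : 0 < q)
    (I : (Fin r → Bool) → Finset (Fin ℓ)) (hI : ∀ R, (I R).card = q)
    (D : (R : Fin r → Bool) → ({i : Fin ℓ // i ∈ I R} → Bool) → Bool)
    (D₀ : ℕ) (hdeg : ∀ i : Fin ℓ, {R : Fin r → Bool | i ∈ I R}.ncard ≤ D₀)
    (πstart πgoal : Fin ℓ → Bool)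
    (haccs : ∀ R : Fin r → Bool, Accepts I D πstart R)
    (haccg : ∀ R : Fin r → Bool, Accepts I D πgoal R)
    (Γ : ℝ) (T : ℕ) (F : ℕ → PAssign I)
    (h0 : F 0 = indAssign I πstart) (hT : F T = indAssign I πgoal)
    (hsat : ∀ t ≤ T, Sat I D (F t))
    (hsize : ∀ t ≤ T, (psize I (F t) : ℝ) ≥ Γ * 2 ^ r)
    (hstep : ∀ t < T, {R : Fin r → Bool | F t R ≠ F (t + 1) R}.ncard ≤ 1) :
    ∃ (T' : ℕ) (π : ℕ → Fin ℓ → Bool),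
      π 0 = πstart ∧ π T' = πgoal ∧
      (∀ t < T', {i : Fin ℓ | π t i ≠ π (t + 1) i}.ncard ≤ 1) ∧
      (∀ t ≤ T', ({R : Fin r → Bool | Accepts I D (π t) R}.ncard : ℝ)
        ≥ Γ * 2 ^ r - q * D₀) := by
  classical
  have hqD : (0:ℝ) ≤ (q : ℝ) * (D₀ : ℝ) := by positivity
  have hIne : ∀ R, (I R).Nonempty := fun R => Finset.card_pos.1 (by rw [hI]; exact hq)
  have htot : ∀ S : Set (Fin r → Bool), (S.ncard : ℝ) ≤ 2 ^ r := by
    intro S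
    have h1 : S.ncard ≤ (Set.univ : Set (Fin r → Bool)).ncard :=
      Set.ncard_le_ncard (Set.subset_univ S) (Set.toFinite _)
    have h2 : (Set.univ : Set (Fin r → Bool)).ncard = 2 ^ r := by
      rw [Set.ncard_univ, Nat.card_eq_fintype_card]
      simp
    rw [h2] at h1
    exact_mod_cast h1
  have hΓ2 : Γ * 2 ^ r ≤ 2 ^ r :=
    le_trans (hsize 0 (Nat.zero_le T)) (htot {R | F 0 R ≠ none})
  have hB : ∀ R₀ : Fin r → Bool,
      ({R : Fin r → Bool | ∃ x ∈ I R, x ∈ I R₀}.ncard : ℝ) ≤ (q : ℝ) * (D₀ : ℝ) := by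
    intro R₀
    have hset : {R : Fin r → Bool | ∃ x ∈ I R, x ∈ I R₀}
        = ↑(Finset.univ.filter (fun R => ∃ x ∈ I R, x ∈ I R₀)) := by
      ext R; simp
    have hsub : (Finset.univ.filter (fun R : Fin r → Bool => ∃ x ∈ I R, x ∈ I R₀))
        ⊆ (I R₀).biUnion (fun x => Finset.univ.filter (fun R => x ∈ I R)) := by
      intro R hR
      simp only [Finset.mem_filter, Finset.mem_biUnion, Finset.mem_univ, true_and] at *
      obtain ⟨x, hx1, hx2⟩ := hR
      exact ⟨x, hx2, hx1⟩
    have hpt : ∀ x ∈ I R₀, (Finset.univ.filter (fun R : Fin r → Bool => x ∈ I R)).card ≤ D₀ := by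
      intro x _
      have h := hdeg x
      have : {R : Fin r → Bool | x ∈ I R}
          = ↑(Finset.univ.filter (fun R : Fin r → Bool => x ∈ I R)) := by ext R; simp
      rwa [this, Set.ncard_coe_finset] at h
    have hcard : (Finset.univ.filter (fun R : Fin r → Bool => ∃ x ∈ I R, x ∈ I R₀)).card
        ≤ q * D₀ := by
      calc _ ≤ ((I R₀).biUnion (fun x => Finset.univ.filter (fun R => x ∈ I R))).card :=
            Finset.card_le_card hsub
        _ ≤ (I R₀).card * D₀ := Finset.card_biUnion_le_card_mul _ _ _ hpt
        _ = q * D₀ := by rw [hI]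
    rw [hset, Set.ncard_coe_finset]
    exact_mod_cast hcard
  have hpiv : ∀ t < T, ∃ R₀, ∀ R ≠ R₀, F t R = F (t+1) R :=
    fun t ht => exists_pivot (hstep t ht)
  let gg : ℕ → Fin ℓ → Bool := seqG I πstart πgoal F T
  let pp : ℕ → Fin ℓ → Bool := seqP I πstart πgoal F T
  refine ⟨(T+1) * ℓ, seqP I πstart πgoal F T, ?_, ?_, ?_, ?_⟩
  · funext i
    show (if i.val < 0 % ℓ then seqG I πstart πgoal F T (0 / ℓ + 1) i else seqG I πstart πgoal F T (0 / ℓ) i) = πstart i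
    rw [Nat.zero_mod, Nat.zero_div, if_neg (by omega)]
    show (if 0 ≤ T then rnd I πstart (F 0) i else πgoal i) = πstart i
    rw [if_pos (Nat.zero_le T), h0, rnd_ind_self]
  · funext i
    have e1 : (T+1) * ℓ % ℓ = 0 := Nat.mul_mod_left _ _
    have e2 : (T+1) * ℓ / ℓ = T + 1 := Nat.mul_div_cancel _ hℓ
    show (if i.val < (T+1) * ℓ % ℓ then seqG I πstart πgoal F T ((T+1) * ℓ / ℓ + 1) i else seqG I πstart πgoal F T ((T+1) * ℓ / ℓ) i)
        = πgoal i
    rw [e1, e2, if_neg (by omega)]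
    show (if T + 1 ≤ T then rnd I πstart (F (T+1)) i else πgoal i) = πgoal i
    rw [if_neg (by omega)]
  · intro n _
    have hk : n % ℓ < ℓ := Nat.mod_lt n hℓ
    have hdm : ℓ * (n / ℓ) + n % ℓ = n := Nat.div_add_mod n ℓ
    have hsub : {i : Fin ℓ | seqP I πstart πgoal F T n i ≠ seqP I πstart πgoal F T (n+1) i} ⊆ {(⟨n % ℓ, hk⟩ : Fin ℓ)} := by
      intro i hi
      simp only [Set.mem_setOf_eq] at hi
      simp only [Set.mem_singleton_iff]
      by_contra hne
      apply hi
      have hiv : i.val ≠ n % ℓ := fun h => hne (Fin.ext h)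
      have hmul : ℓ * (n / ℓ + 1) = ℓ * (n / ℓ) + ℓ := by ring
      by_cases hc : n % ℓ + 1 < ℓ
      · obtain ⟨ed, em⟩ := (Nat.div_mod_unique hℓ).2
          (⟨by omega, hc⟩ : n % ℓ + 1 + ℓ * (n / ℓ) = n + 1 ∧ n % ℓ + 1 < ℓ)
        show (if i.val < n % ℓ then seqG I πstart πgoal F T (n / ℓ + 1) i else seqG I πstart πgoal F T (n / ℓ) i)
          = (if i.val < (n+1) % ℓ then seqG I πstart πgoal F T ((n+1) / ℓ + 1) i else seqG I πstart πgoal F T ((n+1) / ℓ) i)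
        rw [ed, em]
        by_cases hlt : i.val < n % ℓ
        · rw [if_pos hlt, if_pos (by omega)]
        · rw [if_neg hlt, if_neg (by omega)]
      · obtain ⟨ed, em⟩ := (Nat.div_mod_unique hℓ).2
          (⟨by omega, hℓ⟩ : 0 + ℓ * (n / ℓ + 1) = n + 1 ∧ 0 < ℓ)
        show (if i.val < n % ℓ then seqG I πstart πgoal F T (n / ℓ + 1) i else seqG I πstart πgoal F T (n / ℓ) i)
          = (if i.val < (n+1) % ℓ then seqG I πstart πgoal F T ((n+1) / ℓ + 1) i else seqG I πstart πgoal F T ((n+1) / ℓ) i)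
        rw [ed, em]
        have : i.val < n % ℓ := by omega
        rw [if_pos this, if_neg (by omega)]
    calc {i : Fin ℓ | seqP I πstart πgoal F T n i ≠ seqP I πstart πgoal F T (n+1) i}.ncard
        ≤ ({(⟨n % ℓ, hk⟩ : Fin ℓ)} : Set (Fin ℓ)).ncard :=
          Set.ncard_le_ncard hsub (Set.toFinite _)
      _ = 1 := Set.ncard_singleton _
  · intro n hn
    have hk : n % ℓ < ℓ := Nat.mod_lt n hℓ
    by_cases htT : T ≤ n / ℓ
    · have hall : ∀ R, Accepts I D (seqP I πstart πgoal F T n) R := by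
        intro R
        have hgoal : ∀ s, T ≤ s → ∀ i : Fin ℓ, i ∈ I R → seqG I πstart πgoal F T s i = πgoal i := by
          intro s hs i hiR
          show (if s ≤ T then rnd I πstart (F s) i else πgoal i) = πgoal i
          split
          · next h =>
            have hsT : s = T := le_antisymm h hs
            rw [hsT, hT, rnd_ind πstart πgoal hiR]
          · rfl
        have heq : (fun i : {i // i ∈ I R} => seqP I πstart πgoal F T n i.1) = (fun i => πgoal i.1) := by
          funext i
          show (if i.1.val < n % ℓ then seqG I πstart πgoal F T (n / ℓ + 1) i.1 else seqG I πstart πgoal F T (n / ℓ) i.1) = πgoal i.1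
          split
          · exact hgoal (n / ℓ + 1) (by omega) i.1 i.2
          · exact hgoal (n / ℓ) htT i.1 i.2
        show D R (fun i => seqP I πstart πgoal F T n i.1) = true
        rw [heq]
        exact haccg R
      have huniv : {R : Fin r → Bool | Accepts I D (seqP I πstart πgoal F T n) R} = Set.univ :=
        Set.eq_univ_of_forall hall
      rw [huniv, Set.ncard_univ, Nat.card_eq_fintype_card]
      have hcF : ((Fintype.card (Fin r → Bool) : ℕ) : ℝ) = 2 ^ r := by
        simp
      rw [hcF]
      linarith
    · push_neg at htT
      obtain ⟨R₀, hR₀⟩ := hpiv (n / ℓ) htT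
      have hsat1 := hsat (n / ℓ) (le_of_lt htT)
      have hWacc : {R : Fin r → Bool | F (n / ℓ) R ≠ none ∧ ∀ x ∈ I R, x ∉ I R₀}
          ⊆ {R | Accepts I D (seqP I πstart πgoal F T n) R} := by
        rintro R ⟨hR1, hR2⟩
        obtain ⟨g, hg⟩ := Option.ne_none_iff_exists'.1 hR1
        refine accepts_of_mem hsat1 hIne hg (seqP I πstart πgoal F T n) (fun i hi => ?_)
        have hnotin : i ∉ I R₀ := hR2 i hi
        have hrnd : rnd I πstart (F (n / ℓ)) i ∈ (g ⟨i, hi⟩).1 := rnd_mem hsat1 πstart hg hi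
        have heqr : rnd I πstart (F (n / ℓ + 1)) i = rnd I πstart (F (n / ℓ)) i :=
          rnd_eq_of_agree hsat1 πstart (fun R' hne => (hR₀ R' hne).symm) hnotin
        have e1 : seqG I πstart πgoal F T (n / ℓ) i = rnd I πstart (F (n / ℓ)) i := by
          show (if n / ℓ ≤ T then rnd I πstart (F (n / ℓ)) i else πgoal i) = _
          exact if_pos (le_of_lt htT)
        have e2 : seqG I πstart πgoal F T (n / ℓ + 1) i = rnd I πstart (F (n / ℓ + 1)) i := by
          show (if n / ℓ + 1 ≤ T then rnd I πstart (F (n / ℓ + 1)) i else πgoal i) = _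
          exact if_pos htT
        show (if i.val < n % ℓ then seqG I πstart πgoal F T (n / ℓ + 1) i else seqG I πstart πgoal F T (n / ℓ) i) ∈ (g ⟨i, hi⟩).1
        split
        · rw [e2, heqr]; exact hrnd
        · rw [e1]; exact hrnd
      have hA : {R : Fin r → Bool | F (n / ℓ) R ≠ none}
          ⊆ {R : Fin r → Bool | F (n / ℓ) R ≠ none ∧ ∀ x ∈ I R, x ∉ I R₀}
            ∪ {R | ∃ x ∈ I R, x ∈ I R₀} := by
        intro R hR
        by_cases hc : ∀ x ∈ I R, x ∉ I R₀
        · exact Or.inl ⟨hR, hc⟩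
        · push_neg at hc; exact Or.inr hc
      have c1 : psize I (F (n / ℓ))
          ≤ {R : Fin r → Bool | F (n / ℓ) R ≠ none ∧ ∀ x ∈ I R, x ∉ I R₀}.ncard
            + {R : Fin r → Bool | ∃ x ∈ I R, x ∈ I R₀}.ncard :=
        le_trans (Set.ncard_le_ncard hA (Set.toFinite _)) (Set.ncard_union_le _ _)
      have c2 := hB R₀
      have c3 : {R : Fin r → Bool | F (n / ℓ) R ≠ none ∧ ∀ x ∈ I R, x ∉ I R₀}.ncard
          ≤ {R : Fin r → Bool | Accepts I D (seqP I πstart πgoal F T n) R}.ncard :=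
        Set.ncard_le_ncard hWacc (Set.toFinite _)
      have c4 := hsize (n / ℓ) (le_of_lt htT)
      have c1' : (psize I (F (n / ℓ)) : ℝ)
          ≤ ({R : Fin r → Bool | F (n / ℓ) R ≠ none ∧ ∀ x ∈ I R, x ∉ I R₀}.ncard : ℝ)
            + ({R : Fin r → Bool | ∃ x ∈ I R, x ∈ I R₀}.ncard : ℝ) := by exact_mod_cast c1
      have c3' : ({R : Fin r → Bool | F (n / ℓ) R ≠ none ∧ ∀ x ∈ I R, x ∉ I R₀}.ncard : ℝ)
          ≤ ({R : Fin r → Bool | Accepts I D (seqP I πstart πgoal F T n) R}.ncard : ℝ) := by exact_mod_cast c3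
      linarith
end

section
/- Let G = (V, E, Σ, Ψ) be a constraint graph with |V| = N, and let f^start, f^goal be satisfying partial assignments of size N (i.e., total assignments). Suppose there exists a reconfiguration partial assignment sequence from f^start to f^goal in which every partial assignment has size N. Define multi-assignments f'^start(v) = {f^start(v)} and f'^goal(v) = {f^goal(v)} for all v ∈ V. Then there exists a reconfiguration multi-assignment sequence from f'^start to f'^goal in which every multi-assignment has size at most N + 1. -/
open scoped symmDiff

namespace ConstraintGraph

variable {V A : Type*}

/-- A partial assignment `f : V → Σ ∪ {⊥}` satisfies the constraint graph
`G = (V, E, Σ, Ψ)`: for every edge both of whose endpoints are assigned,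
the constraint holds. -/
def PSat (E : Finset (V × V)) (ψ : V × V → A → A → Prop) (f : V → Option A) : Prop :=
  ∀ e ∈ E, ∀ a b, f e.1 = some a → f e.2 = some b → ψ e a b

/-- The size `‖f‖` of a partial assignment: the number of assigned vertices. -/
noncomputable def psize (f : V → Option A) : ℕ := {v | f v ≠ none}.ncard

/-- A multi-assignment `f : V → 2^Σ` satisfies the constraint graph `G`: for every
edge some pair of chosen values satisfies the constraint. -/
def MSat (E : Finset (V × V)) (ψ : V × V → A → A → Prop) (f : V → Finset A) : Prop :=
  ∀ e ∈ E, ∃ a ∈ f e.1, ∃ b ∈ f e.2, ψ e a b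

/-- The size `‖f‖ = Σ_{v∈V} |f(v)|` of a multi-assignment. -/
def msize [Fintype V] (f : V → Finset A) : ℕ := ∑ v, (f v).card

end ConstraintGraph

lemma aux_sd1 {A : Type*} [DecidableEq A] (a b : A) :
    (({a} : Finset A) ∆ ({a, b} : Finset A)).card = if a = b then 0 else 1 := by
  rcases eq_or_ne a b with h | h
  · simp [h]
  · have : ({a} : Finset A) ∆ ({a, b} : Finset A) = {b} := by
      rw [symmDiff_def]
      ext x
      simp only [Finset.sup_eq_union, Finset.mem_union, Finset.mem_sdiff, Finset.mem_singleton, Finset.mem_insert]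
      constructor
      · rintro (⟨rfl, h2⟩ | ⟨(rfl | rfl), h2⟩) <;> tauto
      · rintro rfl; tauto
    simp [this, h]

lemma aux_sd2 {A : Type*} [DecidableEq A] (a b : A) :
    (({a, b} : Finset A) ∆ ({b} : Finset A)).card = if a = b then 0 else 1 := by
  rcases eq_or_ne a b with h | h
  · simp [h]
  · have : ({a, b} : Finset A) ∆ ({b} : Finset A) = {a} := by
      rw [symmDiff_def]
      ext x
      simp only [Finset.sup_eq_union, Finset.mem_union, Finset.mem_sdiff, Finset.mem_singleton, Finset.mem_insert]
      constructor
      · rintro (⟨(rfl | rfl), h2⟩ | ⟨rfl, h2⟩) <;> tauto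
      · rintro rfl; tauto
    simp [this, h]

lemma aux_card {A : Type*} [DecidableEq A] (a b : A) :
    ({a, b} : Finset A).card ≤ 1 + if a = b then 0 else 1 := by
  rcases eq_or_ne a b with h | h <;> simp [h, Finset.card_insert_of_notMem]

open ConstraintGraph in
/-- Let `G` be a constraint graph with `|V| = N` and `f^start, f^goal` satisfying total
assignments. If there is a reconfiguration partial assignment sequence from `f^start`
to `f^goal` in which every partial assignment has size `N`, then there is a
reconfiguration multi-assignment sequence from `v ↦ {f^start v}` to `v ↦ {f^goal v}` in
which every multi-assignment has size at most `N + 1`. -/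
theorem stmt_8 {V A : Type*} [Fintype V] [DecidableEq V] [DecidableEq A] [Fintype A]
    (E : Finset (V × V)) (ψ : V × V → A → A → Prop)
    (N : ℕ) (hN : Fintype.card V = N)
    (fs fg : V → A)
    (hfs : PSat E ψ (fun v => some (fs v))) (hfg : PSat E ψ (fun v => some (fg v)))
    (T : ℕ) (F : ℕ → V → Option A)
    (h0 : F 0 = fun v => some (fs v)) (hT : F T = fun v => some (fg v))
    (hsat : ∀ t ≤ T, PSat E ψ (F t)) (hsize : ∀ t ≤ T, psize (F t) = N)
    (hstep : ∀ t < T, {v : V | F t v ≠ F (t + 1) v}.ncard ≤ 1) :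
    ∃ (T' : ℕ) (F' : ℕ → V → Finset A),
      F' 0 = (fun v => ({fs v} : Finset A)) ∧ F' T' = (fun v => ({fg v} : Finset A)) ∧
      (∀ t ≤ T', MSat E ψ (F' t) ∧ msize (F' t) ≤ N + 1) ∧
      (∀ t < T', ∑ v : V, ((F' t v) ∆ (F' (t + 1) v)).card ≤ 1) := by
  classical
  -- every F t with t ≤ T is total
  have htot : ∀ t ≤ T, ∀ v, F t v ≠ none := by
    intro t ht v
    have h1 : {v : V | F t v ≠ none} = Set.univ := by
      apply Set.eq_of_subset_of_ncard_le (Set.subset_univ _)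
      have : {v : V | F t v ≠ none}.ncard = N := hsize t ht
      rw [this, Set.ncard_univ, Nat.card_eq_fintype_card, hN]
    have : v ∈ {v : V | F t v ≠ none} := by rw [h1]; trivial
    exact this
  set g : ℕ → V → A := fun t v => (F t v).getD (fs v) with hgdef
  have hg : ∀ t ≤ T, ∀ v, F t v = some (g t v) := by
    intro t ht v
    obtain ⟨a, ha⟩ := Option.ne_none_iff_exists'.mp (htot t ht v)
    simp [hgdef, ha]
  have hg0 : ∀ v, g 0 v = fs v := by intro v; simp [hgdef, h0]
  have hgT : ∀ v, g T v = fg v := by intro v; simp [hgdef, hT]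
  -- ncard of disagreement set
  have hD : ∀ a b : ℕ, a ≤ T → b ≤ T →
      ({v : V | g a v ≠ g b v}).ncard = {v : V | F a v ≠ F b v}.ncard := by
    intro a b ha hb
    congr 1
    ext v
    rw [Set.mem_setOf_eq, Set.mem_setOf_eq, hg a ha v, hg b hb v]
    exact (Option.some_injective A).ne_iff.symm
  have hsum : ∀ a b : ℕ, (∑ v : V, if g a v = g b v then 0 else 1) =
      ({v : V | g a v ≠ g b v}).ncard := by
    intro a b
    rw [Set.ncard_eq_toFinset_card', Set.toFinset_setOf, Finset.card_filter]
    congr 1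
    ext v
    by_cases h : g a v = g b v <;> simp [h]
  refine ⟨2 * T, fun n v => {g (n / 2) v, g ((n + 1) / 2) v}, ?_, ?_, ?_, ?_⟩
  · funext v; simp [hg0 v]
  · funext v
    have e1 : 2 * T / 2 = T := by omega
    have e2 : (2 * T + 1) / 2 = T := by omega
    simp [e1, e2, hgT v]
  · intro n hn
    have ht1 : n / 2 ≤ T := by omega
    constructor
    · intro e he
      refine ⟨g (n / 2) e.1, by simp, g (n / 2) e.2, by simp, ?_⟩
      exact hsat (n / 2) ht1 e he _ _ (hg _ ht1 e.1) (hg _ ht1 e.2)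
    · have hb : msize (fun v => ({g (n / 2) v, g ((n + 1) / 2) v} : Finset A)) ≤
          ∑ v : V, (1 + if g (n / 2) v = g ((n + 1) / 2) v then 0 else 1) := by
        apply Finset.sum_le_sum
        intro v _
        exact aux_card _ _
      refine le_trans hb ?_
      rw [Finset.sum_add_distrib, Finset.sum_const, Finset.card_univ, hN, smul_eq_mul, mul_one]
      have hle : (∑ v : V, if g (n / 2) v = g ((n + 1) / 2) v then 0 else 1) ≤ 1 := by
        rcases Nat.even_or_odd n with ⟨t, rfl⟩ | ⟨t, rfl⟩
        · have e1 : (t + t) / 2 = (t + t + 1) / 2 := by omega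
          simp [e1]
        · have e1 : (2 * t + 1) / 2 = t := by omega
          have e2 : (2 * t + 1 + 1) / 2 = t + 1 := by omega
          have htT : t < T := by omega
          rw [e1, e2, hsum, hD t (t + 1) (by omega) (by omega)]
          exact hstep t htT
      omega
  · intro n hn
    rcases Nat.even_or_odd n with ⟨t, rfl⟩ | ⟨t, rfl⟩
    · have e1 : (t + t) / 2 = t := by omega
      have e2 : (t + t + 1) / 2 = t := by omega
      have e3 : (t + t + 1 + 1) / 2 = t + 1 := by omega
      have htT : t < T := by omega
      calc (∑ v : V, ((({g ((t + t) / 2) v, g ((t + t + 1) / 2) v} : Finset A))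
              ∆ ({g ((t + t + 1) / 2) v, g ((t + t + 1 + 1) / 2) v} : Finset A)).card)
          = ∑ v : V, if g t v = g (t + 1) v then 0 else 1 := by
            apply Finset.sum_congr rfl
            intro v _
            rw [e1, e2, e3]
            have : ({g t v, g t v} : Finset A) = {g t v} := by simp
            rw [this]
            exact aux_sd1 _ _
        _ ≤ 1 := by
            rw [hsum, hD t (t + 1) (by omega) (by omega)]
            exact hstep t htT
    · have e1 : (2 * t + 1) / 2 = t := by omega
      have e2 : (2 * t + 1 + 1) / 2 = t + 1 := by omega
      have e3 : (2 * t + 1 + 1 + 1) / 2 = t + 1 := by omega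
      have htT : t < T := by omega
      calc (∑ v : V, ((({g ((2 * t + 1) / 2) v, g ((2 * t + 1 + 1) / 2) v} : Finset A))
              ∆ ({g ((2 * t + 1 + 1) / 2) v, g ((2 * t + 1 + 1 + 1) / 2) v} : Finset A)).card)
          = ∑ v : V, if g t v = g (t + 1) v then 0 else 1 := by
            apply Finset.sum_congr rfl
            intro v _
            rw [e1, e2, e3]
            have : ({g (t + 1) v, g (t + 1) v} : Finset A) = {g (t + 1) v} := by simp
            rw [this]
            exact aux_sd2 _ _
        _ ≤ 1 := by
            rw [hsum, hD t (t + 1) (by omega) (by omega)]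
            exact hstep t htT
end

section
/- Let ε ∈ (0,1), let G = (V, E, Σ, Ψ) be a constraint graph with |V| = N ≥ 4/ε in which every vertex is incident to at least one edge, and let f^start, f^goal be satisfying partial assignments of size N (i.e., total assignments). Suppose every reconfiguration partial assignment sequence from f^start to f^goal contains a partial assignment of size less than (ε/2)·N. Then every reconfiguration multi-assignment sequence from f'^start to f'^goal, where f'^start(v) = {f^start(v)} and f'^goal(v) = {f^goal(v)} for all v ∈ V, contains a multi-assignment of size greater than (2−ε)·(N+1). -/
open scoped symmDiff

open ConstraintGraph in
/-- Let `ε ∈ (0,1)`, `G` a constraint graph with `|V| = N ≥ 4/ε` in which every vertex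
is incident to at least one edge, and `f^start, f^goal` satisfying total assignments.
If every reconfiguration partial assignment sequence from `f^start` to `f^goal`
contains a partial assignment of size less than `(ε/2)·N`, then every reconfiguration
multi-assignment sequence from `v ↦ {f^start v}` to `v ↦ {f^goal v}` contains a
multi-assignment of size greater than `(2−ε)·(N+1)`. -/
theorem stmt_9 {V A : Type*} [Fintype V] [DecidableEq V] [DecidableEq A] [Fintype A]
    (E : Finset (V × V)) (ψ : V × V → A → A → Prop)
    (ε : ℝ) (hε : ε ∈ Set.Ioo (0 : ℝ) 1)
    (N : ℕ) (hN : Fintype.card V = N) (hN4 : (N : ℝ) ≥ 4 / ε)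
    (hinc : ∀ v : V, ∃ e ∈ E, e.1 = v ∨ e.2 = v)
    (fs fg : V → A)
    (hfs : PSat E ψ (fun v => some (fs v))) (hfg : PSat E ψ (fun v => some (fg v)))
    (hyp : ∀ (T : ℕ) (F : ℕ → V → Option A),
      F 0 = (fun v => some (fs v)) → F T = (fun v => some (fg v)) →
      (∀ t ≤ T, PSat E ψ (F t)) →
      (∀ t < T, {v : V | F t v ≠ F (t + 1) v}.ncard ≤ 1) →
      ∃ t ≤ T, (psize (F t) : ℝ) < ε / 2 * N) :
    ∀ (T' : ℕ) (F' : ℕ → V → Finset A),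
      F' 0 = (fun v => ({fs v} : Finset A)) → F' T' = (fun v => ({fg v} : Finset A)) →
      (∀ t ≤ T', MSat E ψ (F' t)) →
      (∀ t < T', ∑ v : V, ((F' t v) ∆ (F' (t + 1) v)).card ≤ 1) →
      ∃ t ≤ T', (msize (F' t) : ℝ) > (2 - ε) * (N + 1) := by
  classical
  intro T' F' h0 hT hsat hstep
  by_contra hcon
  push_neg at hcon
  set g : Finset A → Option A := fun s => if h : ∃ a, s = {a} then some h.choose else none
    with hg
  have hg_single : ∀ a : A, g {a} = some a := by
    intro a
    have h : ∃ b, ({a} : Finset A) = {b} := ⟨a, rfl⟩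
    have hs := h.choose_spec
    have hac : a = h.choose := Finset.singleton_injective hs
    simp only [hg, dif_pos h, ← hac]
  have hg_some : ∀ (s : Finset A) (a : A), g s = some a → s = {a} := by
    intro s a h
    by_cases hs : ∃ b, s = {b}
    · simp only [hg, dif_pos hs, Option.some_inj] at h
      rw [hs.choose_spec, h]
    · simp only [hg, dif_neg hs] at h
      exact absurd h (by simp)
  have hF0 : (fun t v => g (F' t v)) 0 = (fun v => some (fs v)) := by
    funext v
    simp only [h0]
    exact hg_single _
  have hFT : (fun t v => g (F' t v)) T' = (fun v => some (fg v)) := by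
    funext v
    simp only [hT]
    exact hg_single _
  have hFsat : ∀ t ≤ T', PSat E ψ ((fun t v => g (F' t v)) t) := by
    intro t ht e he a b ha hb
    have ha' := hg_some _ _ ha
    have hb' := hg_some _ _ hb
    obtain ⟨a', ha'', b', hb'', hψ⟩ := hsat t ht e he
    rw [ha', Finset.mem_singleton] at ha''
    rw [hb', Finset.mem_singleton] at hb''
    rwa [← ha'', ← hb'']
  have hFstep : ∀ t < T',
      {v : V | (fun t v => g (F' t v)) t v ≠ (fun t v => g (F' t v)) (t + 1) v}.ncard ≤ 1 := by
    intro t ht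
    set S : Finset V := Finset.univ.filter (fun v => F' t v ≠ F' (t + 1) v) with hS
    have hsub : {v : V | g (F' t v) ≠ g (F' (t + 1) v)} ⊆ ↑S := by
      intro v hv
      simp only [hS, Finset.coe_filter, Set.mem_setOf_eq, Finset.mem_univ, true_and]
      intro heq
      exact hv (by rw [heq])
    have hcard : S.card ≤ 1 := by
      calc S.card = ∑ v ∈ S, 1 := by simp
        _ ≤ ∑ v ∈ S, ((F' t v) ∆ (F' (t + 1) v)).card := by
            apply Finset.sum_le_sum
            intro v hv
            simp only [hS, Finset.mem_filter] at hv
            have hne₀ : (F' t v) ∆ (F' (t + 1) v) ≠ ∅ := by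
              intro h
              exact hv.2 (symmDiff_eq_bot.mp h)
            exact Finset.card_pos.mpr (Finset.nonempty_iff_ne_empty.mpr hne₀)
        _ ≤ ∑ v : V, ((F' t v) ∆ (F' (t + 1) v)).card :=
            Finset.sum_le_sum_of_subset (Finset.subset_univ S)
        _ ≤ 1 := hstep t ht
    calc {v : V | (fun t v => g (F' t v)) t v ≠ (fun t v => g (F' t v)) (t + 1) v}.ncard
        ≤ (↑S : Set V).ncard := Set.ncard_le_ncard hsub S.finite_toSet
      _ = S.card := Set.ncard_coe_finset S
      _ ≤ 1 := hcard
  obtain ⟨t, ht, hlt⟩ := hyp T' (fun t v => g (F' t v)) hF0 hFT hFsat hFstep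
  -- contradiction at time t
  have hne : ∀ v, (F' t v).Nonempty := by
    intro v
    obtain ⟨e, he, hev⟩ := hinc v
    obtain ⟨a, ha, b, hb, _⟩ := hsat t ht e he
    rcases hev with h | h
    · exact ⟨a, h ▸ ha⟩
    · exact ⟨b, h ▸ hb⟩
  set S1 : Finset V := Finset.univ.filter (fun v => (F' t v).card = 1) with hS1
  have hpsize : psize (fun v => g (F' t v)) = S1.card := by
    rw [psize, ← Set.ncard_coe_finset]
    congr 1
    ext v
    simp only [hS1, Finset.coe_filter, Set.mem_setOf_eq, Finset.mem_univ, true_and]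
    constructor
    · intro hv
      by_cases hs : ∃ a, F' t v = {a}
      · obtain ⟨a, ha⟩ := hs
        rw [ha, Finset.card_singleton]
      · exact absurd (by simp only [hg, dif_neg hs]) hv
    · intro hv
      obtain ⟨a, ha⟩ := Finset.card_eq_one.mp hv
      have : g (F' t v) = some a := ha ▸ hg_single a
      simp [this]
  have hkey : ∀ v : V, 2 ≤ (F' t v).card + (if (F' t v).card = 1 then 1 else 0) := by
    intro v
    have h1 : 1 ≤ (F' t v).card := Finset.card_pos.mpr (hne v)
    by_cases h : (F' t v).card = 1 <;> simp [h] <;> omega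
  have hsum : 2 * N ≤ msize (F' t) + S1.card := by
    have : S1.card = ∑ v : V, (if (F' t v).card = 1 then 1 else 0) := by
      rw [hS1, Finset.card_filter]
    rw [msize, this, ← Finset.sum_add_distrib]
    calc 2 * N = ∑ _v : V, 2 := by
          rw [Finset.sum_const, Finset.card_univ, hN, smul_eq_mul, mul_comm]
      _ ≤ _ := Finset.sum_le_sum fun v _ => hkey v
  have hms : (msize (F' t) : ℝ) ≤ (2 - ε) * (N + 1) := hcon t ht
  have h4 : (4 : ℝ) ≤ N * ε := (div_le_iff₀ hε.1).mp hN4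
  have hsum' : (2 : ℝ) * N ≤ (msize (F' t) : ℝ) + S1.card := by
    exact_mod_cast hsum
  rw [hpsize] at hlt
  nlinarith [hε.1, hε.2]
end

section
/- Let G = (V, E, Σ, Ψ) be a constraint graph in which every vertex is incident to at least one edge, let U be a finite universe, and for each pair (v,α) ∈ V × Σ let S_{v,α} ⊆ U, with the sets S_{v,α} pairwise distinct; let F = {S_{v,α} : (v,α) ∈ V × Σ}. Assume that for every subset C ⊆ V × Σ, the multi-assignment f_C defined by f_C(v) = {α ∈ Σ : (v,α) ∈ C} satisfies G if and only if ⋃_{(v,α)∈C} S_{v,α} = U. Let f^start, f^goal be satisfying multi-assignments with |f^start(v)| = |f^goal(v)| = 1 for all v ∈ V, and let C^start = {S_{v,α} : v ∈ V, α ∈ f^start(v)} and C^goal = {S_{v,α} : v ∈ V, α ∈ f^goal(v)}. Then (a) opt(F) = |V|, and (b) the minimum over all reconfiguration multi-assignment sequences from f^start to f^goal of the maximum size of a multi-assignment in the sequence equals the minimum over all reconfiguration sequences of covers from C^start to C^goal of the maximum size of a cover in the sequence. -/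
open scoped symmDiff

namespace LabelCoverToSetCover

variable {V A U : Type*}

/-- A multi-assignment `f : V → 2^Σ` satisfies the constraint graph `G`: for every
edge some pair of chosen values satisfies the constraint. -/
def MSat (E : Finset (V × V)) (ψ : V × V → A → A → Prop) (f : V → Finset A) : Prop :=
  ∀ e ∈ E, ∃ a ∈ f e.1, ∃ b ∈ f e.2, ψ e a b

/-- The size `‖f‖ = Σ_{v∈V} |f(v)|` of a multi-assignment. -/
def msize [Fintype V] (f : V → Finset A) : ℕ := ∑ v, (f v).card

/-- `C` is a cover of the set system `(U, F)`: a subfamily of `F` whose union is `U`. -/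
def IsCover (F C : Finset (Finset U)) : Prop :=
  C ⊆ F ∧ ∀ u : U, ∃ S ∈ C, u ∈ S

end LabelCoverToSetCover

section AuxLemmas
variable {V A U : Type*} [Fintype V] [Fintype A] [DecidableEq V] [DecidableEq A]
  [DecidableEq U]

lemma sum_fiber_card (s : Finset (V × A)) :
    ∑ v : V, (Finset.univ.filter fun a => (v, a) ∈ s).card = s.card := by
  rw [Finset.card_eq_sum_card_fiberwise (f := Prod.fst) (t := Finset.univ)
    (fun x _ => Finset.mem_univ _)]
  refine Finset.sum_congr rfl fun v _ => ?_
  apply Finset.card_bij (fun a _ => (v, a))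
  · intro a ha
    simp only [Finset.mem_filter, Finset.mem_univ, true_and] at ha ⊢
    exact ⟨ha, trivial⟩
  · intro a _ b _ h
    exact ((Prod.mk.injEq _ _ _ _).mp h).2
  · intro p hp
    simp only [Finset.mem_filter, Finset.mem_univ, true_and] at hp
    refine ⟨p.2, ?_, ?_⟩
    · simp only [Finset.mem_filter, Finset.mem_univ, true_and]
      rw [show (v, p.2) = p from Prod.ext hp.2.symm rfl]
      exact hp.1
    · exact Prod.ext hp.2.symm rfl

lemma fiber_symmDiff (v : V) (s t : Finset (V × A)) :
    ((Finset.univ.filter fun a => (v, a) ∈ s) ∆ (Finset.univ.filter fun a => (v, a) ∈ t))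
      = Finset.univ.filter fun a => (v, a) ∈ s ∆ t := by
  ext a
  simp [Finset.mem_symmDiff]

lemma image_preimage_filter {S : V × A → Finset U} (hS : Function.Injective S)
    (C : Finset (Finset U)) (hC : C ⊆ Finset.univ.image S) :
    (Finset.univ.filter fun p => S p ∈ C).image S = C := by
  ext T
  constructor
  · rintro hT
    obtain ⟨p, hp, rfl⟩ := Finset.mem_image.mp hT
    exact (Finset.mem_filter.mp hp).2
  · intro hT
    obtain ⟨p, _, rfl⟩ := Finset.mem_image.mp (hC hT)
    exact Finset.mem_image.mpr ⟨p, Finset.mem_filter.mpr ⟨Finset.mem_univ _, hT⟩, rfl⟩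

lemma mem_image_filter_iff {S : V × A → Finset U} (hS : Function.Injective S)
    (D : Finset (V × A)) (p : V × A) : S p ∈ D.image S ↔ p ∈ D := by
  constructor
  · intro h
    obtain ⟨q, hq, hEq⟩ := Finset.mem_image.mp h
    rwa [← hS hEq]
  · exact fun h => Finset.mem_image_of_mem S h

end AuxLemmas

open LabelCoverToSetCover in
/-- Let `G = (V, E, Σ, Ψ)` be a constraint graph in which every vertex is incident to an
edge, and let `S : V × Σ → 2^U` be an injective family with `F = {S_{v,α}}`. Assume that
for every `C ⊆ V × Σ` the multi-assignment `f_C(v) = {α : (v,α) ∈ C}` satisfies `G` iff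
`⋃_{(v,α)∈C} S_{v,α} = U`. Let `f^start, f^goal` be satisfying multi-assignments with all
values singletons, with corresponding covers `C^start, C^goal`. Then (a) `opt(F) = |V|`,
and (b) the minimum over reconfiguration multi-assignment sequences from `f^start` to
`f^goal` of the maximum size equals the minimum over reconfiguration sequences of covers
from `C^start` to `C^goal` of the maximum size. -/
theorem stmt_11 {V A U : Type*}
    [Fintype V] [Fintype A] [Fintype U] [DecidableEq V] [DecidableEq A] [DecidableEq U]
    (E : Finset (V × V)) (ψ : V × V → A → A → Prop)
    (hinc : ∀ v : V, ∃ e ∈ E, e.1 = v ∨ e.2 = v)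
    (S : V × A → Finset U) (hS : Function.Injective S)
    (F : Finset (Finset U)) (hF : F = Finset.univ.image S)
    (hcorr : ∀ C : Finset (V × A),
      MSat E ψ (fun v => Finset.univ.filter fun a => (v, a) ∈ C) ↔
        (∀ u : U, ∃ p ∈ C, u ∈ S p))
    (fs fg : V → Finset A) (hfs : MSat E ψ fs) (hfg : MSat E ψ fg)
    (hfs1 : ∀ v, (fs v).card = 1) (hfg1 : ∀ v, (fg v).card = 1)
    (Cs Cg : Finset (Finset U))
    (hCs : Cs = (Finset.univ.filter fun p : V × A => p.2 ∈ fs p.1).image S)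
    (hCg : Cg = (Finset.univ.filter fun p : V × A => p.2 ∈ fg p.1).image S) :
    IsLeast {k : ℕ | ∃ C, IsCover F C ∧ C.card = k} (Fintype.card V) ∧
    sInf {m : ℕ | ∃ (T : ℕ) (G : ℕ → V → Finset A),
        G 0 = fs ∧ G T = fg ∧
        (∀ t ≤ T, MSat E ψ (G t)) ∧
        (∀ t < T, ∑ v : V, ((G t v) ∆ (G (t + 1) v)).card ≤ 1) ∧
        (∀ t ≤ T, msize (G t) ≤ m)} =
      sInf {m : ℕ | ∃ (T : ℕ) (𝒞 : ℕ → Finset (Finset U)),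
        𝒞 0 = Cs ∧ 𝒞 T = Cg ∧
        (∀ t ≤ T, IsCover F (𝒞 t)) ∧
        (∀ t < T, ((𝒞 t) ∆ (𝒞 (t + 1))).card ≤ 1) ∧
        (∀ t ≤ T, (𝒞 t).card ≤ m)} := by
  -- `toC f` : the subset of `V × A` coding a multi-assignment
  set toC : (V → Finset A) → Finset (V × A) :=
    fun f => Finset.univ.filter fun p : V × A => p.2 ∈ f p.1 with htoC
  have hfiber_toC : ∀ (f : V → Finset A) (v : V),
      (Finset.univ.filter fun a => (v, a) ∈ toC f) = f v := by
    intro f v; ext a; simp [htoC]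
  have hasg_toC : ∀ f : V → Finset A,
      (fun v => Finset.univ.filter fun a => (v, a) ∈ toC f) = f := by
    intro f; funext v; exact hfiber_toC f v
  -- a multi-assignment built from a satisfying `D ⊆ V × A` is nonempty at each vertex
  have hnonempty : ∀ D : Finset (V × A),
      MSat E ψ (fun v => Finset.univ.filter fun a => (v, a) ∈ D) →
      ∀ v : V, 1 ≤ (Finset.univ.filter fun a => (v, a) ∈ D).card := by
    intro D hD v
    obtain ⟨e, he, hev⟩ := hinc v
    obtain ⟨a, ha, b, hb, _⟩ := hD e he
    rcases hev with h | h
    · exact Finset.card_pos.mpr ⟨a, h ▸ ha⟩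
    · exact Finset.card_pos.mpr ⟨b, h ▸ hb⟩
  constructor
  · -- part (a)
    constructor
    · -- `Cs` is a cover of size `|V|`
      refine ⟨Cs, ⟨?_, ?_⟩, ?_⟩
      · rw [hCs, hF]
        exact Finset.image_subset_image (Finset.subset_univ _)
      · intro u
        have hsat : MSat E ψ (fun v => Finset.univ.filter fun a => (v, a) ∈ toC fs) := by
          rw [hasg_toC]; exact hfs
        obtain ⟨p, hp, hu⟩ := (hcorr (toC fs)).mp hsat u
        exact ⟨S p, hCs ▸ Finset.mem_image_of_mem S hp, hu⟩
      · rw [hCs, Finset.card_image_of_injective _ hS]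
        rw [show (Finset.univ.filter fun p : V × A => p.2 ∈ fs p.1) = toC fs from rfl,
          ← sum_fiber_card (toC fs)]
        simp only [hfiber_toC, hfs1, Finset.sum_const, smul_eq_mul, mul_one,
          Finset.card_univ]
    · -- lower bound
      rintro k ⟨C, ⟨hCF, hCcov⟩, rfl⟩
      set D := Finset.univ.filter fun p : V × A => S p ∈ C with hD
      have himg : D.image S = C :=
        image_preimage_filter hS C (fun T hT => hF ▸ hCF hT)
      have hsat : MSat E ψ (fun v => Finset.univ.filter fun a => (v, a) ∈ D) := by
        refine (hcorr D).mpr fun u => ?_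
        obtain ⟨T, hT, hu⟩ := hCcov u
        obtain ⟨p, _, rfl⟩ := Finset.mem_image.mp (by rw [himg]; exact hT :
          T ∈ D.image S)
        exact ⟨p, by rwa [← himg, mem_image_filter_iff hS] at hT, hu⟩
      calc Fintype.card V = ∑ _v : V, 1 := by simp
        _ ≤ ∑ v : V, (Finset.univ.filter fun a => (v, a) ∈ D).card :=
            Finset.sum_le_sum fun v _ => hnonempty D hsat v
        _ = D.card := sum_fiber_card D
        _ = C.card := by rw [← himg, Finset.card_image_of_injective _ hS]
  · -- part (b): the two feasible sets coincide
    congr 1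
    ext m
    constructor
    · rintro ⟨T, G, h0, hT, hsat, hstep, hsize⟩
      refine ⟨T, fun t => (toC (G t)).image S, ?_, ?_, ?_, ?_, ?_⟩
      · show (toC (G 0)).image S = Cs
        rw [h0, hCs]
      · show (toC (G T)).image S = Cg
        rw [hT, hCg]
      · intro t ht
        refine ⟨hF ▸ Finset.image_subset_image (Finset.subset_univ _), fun u => ?_⟩
        have : MSat E ψ (fun v => Finset.univ.filter fun a => (v, a) ∈ toC (G t)) := by
          rw [hasg_toC]; exact hsat t ht
        obtain ⟨p, hp, hu⟩ := (hcorr (toC (G t))).mp this u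
        exact ⟨S p, Finset.mem_image_of_mem S hp, hu⟩
      · intro t ht
        rw [← Finset.image_symmDiff _ _ hS, Finset.card_image_of_injective _ hS,
          ← sum_fiber_card (toC (G t) ∆ toC (G (t + 1)))]
        calc ∑ v : V, (Finset.univ.filter fun a => (v, a) ∈ toC (G t) ∆ toC (G (t+1))).card
            = ∑ v : V, ((G t v) ∆ (G (t + 1) v)).card := by
              refine Finset.sum_congr rfl fun v _ => ?_
              rw [← fiber_symmDiff v (toC (G t)) (toC (G (t+1))), hfiber_toC, hfiber_toC]
          _ ≤ 1 := hstep t ht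
      · intro t ht
        rw [Finset.card_image_of_injective _ hS, ← sum_fiber_card (toC (G t))]
        calc ∑ v : V, (Finset.univ.filter fun a => (v, a) ∈ toC (G t)).card
            = msize (G t) := by
              refine Finset.sum_congr rfl fun v _ => ?_
              rw [hfiber_toC]
          _ ≤ m := hsize t ht
    · rintro ⟨T, 𝒞, h0, hT, hcov, hstep, hsize⟩
      set D : ℕ → Finset (V × A) :=
        fun t => Finset.univ.filter fun p : V × A => S p ∈ 𝒞 t with hDdef
      have himg : ∀ t ≤ T, (D t).image S = 𝒞 t := fun t ht =>
        image_preimage_filter hS (𝒞 t) (fun T' hT' => hF ▸ (hcov t ht).1 hT')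
      have hDtoC : ∀ (f : V → Finset A) (t : ℕ),
          𝒞 t = (toC f).image S → D t = toC f := by
        intro f t hEq
        ext p
        simp only [hDdef, Finset.mem_filter, Finset.mem_univ, true_and, hEq]
        exact mem_image_filter_iff hS (toC f) p
      refine ⟨T, fun t v => Finset.univ.filter fun a => (v, a) ∈ D t, ?_, ?_, ?_, ?_, ?_⟩
      · funext v
        show (Finset.univ.filter fun a => (v, a) ∈ D 0) = fs v
        rw [hDtoC fs 0 (by rw [h0, hCs]), hfiber_toC]
      · funext v
        show (Finset.univ.filter fun a => (v, a) ∈ D T) = fg v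
        rw [hDtoC fg T (by rw [hT, hCg]), hfiber_toC]
      · intro t ht
        refine (hcorr (D t)).mpr fun u => ?_
        obtain ⟨T', hT', hu⟩ := (hcov t ht).2 u
        obtain ⟨p, hp, rfl⟩ := Finset.mem_image.mp (by rw [himg t ht]; exact hT' :
          T' ∈ (D t).image S)
        exact ⟨p, hp, hu⟩
      · intro t ht
        calc ∑ v : V, ((Finset.univ.filter fun a => (v, a) ∈ D t)
              ∆ (Finset.univ.filter fun a => (v, a) ∈ D (t + 1))).card
            = (D t ∆ D (t + 1)).card := by
              rw [← sum_fiber_card (D t ∆ D (t + 1))]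
              exact Finset.sum_congr rfl fun v _ => by rw [fiber_symmDiff]
          _ = ((𝒞 t) ∆ (𝒞 (t + 1))).card := by
              rw [← himg t (le_of_lt ht), ← himg (t + 1) ht,
                ← Finset.image_symmDiff _ _ hS, Finset.card_image_of_injective _ hS]
          _ ≤ 1 := hstep t ht
      · intro t ht
        calc msize (fun v => Finset.univ.filter fun a => (v, a) ∈ D t)
            = (D t).card := sum_fiber_card (D t)
          _ = (𝒞 t).card := by
              rw [← himg t ht, Finset.card_image_of_injective _ hS]
          _ ≤ m := hsize t ht
end

section
/- Let X be a d-regular graph on a finite vertex set V such that every eigenvalue of its adjacency matrix other than the largest one has absolute value at most λ, and suppose λ/d < ε/4 for some ε ∈ (0,1). Let S ⊆ V with |S| < (1−ε)·|V|, let δ ∈ (0,1), and let ρ be a positive integer with ρ ≥ (2/ε)·ln(1/δ). Then the number of walks (v₁, v₂, …, v_ρ) in X (sequences of vertices in which consecutive vertices are adjacent) with v_k ∈ S for every k ∈ {1,…,ρ} is less than δ·|V|·d^{ρ−1}; equivalently, a uniformly random (ρ−1)-step walk in X stays entirely inside S with probability less than δ. -/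
open Matrix Finset
open scoped RealInnerProductSpace

noncomputable def toE {V : Type*} [Fintype V] (f : V → ℝ) : EuclideanSpace ℝ V := WithLp.toLp 2 f

noncomputable def stepM {V : Type*} [Fintype V] (A : Matrix V V ℝ) (ind : V → ℝ)
    (w : V → ℝ) : V → ℝ :=
  fun v => ind v * (A *ᵥ fun u => ind u * w u) v

section Aux

variable {V : Type*} [Fintype V] [DecidableEq V]

lemma symE {A : Matrix V V ℝ} (hA : A.IsHermitian) (x y : EuclideanSpace ℝ V) :
    ⟪toE (A *ᵥ x), y⟫ = ⟪x, toE (A *ᵥ y)⟫ := by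
  have := (Matrix.isHermitian_iff_isSymmetric.mp hA) x y
  simpa [Matrix.toEuclideanLin_apply, toE] using this

omit [DecidableEq V] in
lemma innerE (x y : EuclideanSpace ℝ V) : ⟪x, y⟫ = ∑ v, x v * y v := by
  simp [PiLp.inner_apply, RCLike.inner_apply, mul_comm]

omit [DecidableEq V] in
lemma normE (x : EuclideanSpace ℝ V) : ‖x‖^2 = ∑ v, (x v)^2 := by
  rw [EuclideanSpace.norm_eq, Real.sq_sqrt (Finset.sum_nonneg fun i _ => sq_nonneg _)]; simp [Real.norm_eq_abs, sq_abs]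

omit [DecidableEq V] in
lemma norm_le_normE {x y : EuclideanSpace ℝ V} (h : ∑ v, (x v)^2 ≤ ∑ v, (y v)^2) :
    ‖x‖ ≤ ‖y‖ := by
  have hx := normE x; have hy := normE y
  nlinarith [norm_nonneg x, norm_nonneg y]

omit [DecidableEq V] in
lemma norm_indE (ind : V → ℝ) (hind : ∀ v, ind v = 0 ∨ ind v = 1) :
    ‖toE ind‖ = Real.sqrt (∑ v, ind v) := by
  have h2 : ‖toE ind‖^2 = ∑ v, ind v := by
    rw [normE]
    apply Finset.sum_congr rfl
    intro v _
    show (ind v)^2 = ind v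
    rcases hind v with h | h <;> rw [h] <;> ring
  rw [← h2, Real.sqrt_sq (norm_nonneg _)]

lemma aux_gap {A : Matrix V V ℝ} (hA : A.IsHermitian) {i₀ : V} {lam dR : ℝ}
    (hone : A *ᵥ (fun _ => (1:ℝ)) = fun _ => dR)
    (hgap : ∀ i, i ≠ i₀ → |hA.eigenvalues i| ≤ lam)
    (hlam : 0 ≤ lam) (hld : lam < dR)
    (y : EuclideanSpace ℝ V) (hy : ∑ v, y v = 0) :
    ‖toE (A *ᵥ y)‖ ≤ lam * ‖y‖ := by
  set B := hA.eigenvectorBasis with hB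
  set μ := hA.eigenvalues with hμ
  have heig : ∀ i, toE (A *ᵥ B i) = μ i • B i := fun i =>
    congrArg toE (hA.mulVec_eigenvectorBasis i)
  have hBy : ∀ i, ⟪B i, toE (A *ᵥ y)⟫ = μ i * ⟪B i, y⟫ := by
    intro i
    rw [← symE hA, heig, real_inner_smul_left]
  set one : EuclideanSpace ℝ V := toE (fun _ => 1) with hone1
  have honeE : toE (A *ᵥ one) = dR • one := by
    show toE (A *ᵥ (fun _ => (1:ℝ))) = dR • one
    rw [hone]; ext v; simp [toE, one]
  have h1 : ∀ i, i ≠ i₀ → ⟪B i, one⟫ = 0 := by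
    intro i hi
    have h2 : μ i * ⟪B i, one⟫ = dR * ⟪B i, one⟫ := by
      rw [← real_inner_smul_left, ← heig, symE hA, honeE, real_inner_smul_right]
    have hne : μ i ≠ dR := by
      have := hgap i hi
      intro h; rw [h] at this
      have : dR ≤ lam := le_trans (le_abs_self _) this
      linarith
    by_contra hc
    exact hne (mul_right_cancel₀ hc h2)
  have hsum := B.sum_repr' one
  have hone_eq : one = ⟪B i₀, one⟫ • B i₀ := by
    conv_lhs => rw [← hsum]
    exact Finset.sum_eq_single i₀ (fun b _ hb => by rw [h1 b hb, zero_smul])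
      (fun h => absurd (mem_univ i₀) h)
  have hinner_one_y : ⟪one, y⟫ = 0 := by
    rw [innerE]; simpa [one, toE] using hy
  have hc0 : ⟪B i₀, one⟫ ≠ 0 := by
    intro h
    have : one = 0 := by rw [hone_eq, h, zero_smul]
    have h2 : (1:ℝ) = 0 := congrFun (congrArg (fun (f : EuclideanSpace ℝ V) => (f : V → ℝ)) this) i₀
    norm_num at h2
  have hyi₀ : ⟪B i₀, y⟫ = 0 := by
    have h3 : ⟪B i₀, one⟫ * ⟪B i₀, y⟫ = 0 := by
      rw [← real_inner_smul_left, ← hone_eq]; exact hinner_one_y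
    rcases mul_eq_zero.mp h3 with h | h
    · exact absurd h hc0
    · exact h
  have hP : ∀ (z : EuclideanSpace ℝ V), ‖z‖^2 = ∑ i, ⟪B i, z⟫^2 := by
    intro z
    rw [← real_inner_self_eq_norm_sq, ← B.sum_inner_mul_inner z z]
    congr 1; ext i; rw [real_inner_comm z (B i), sq]
  have key : ‖toE (A *ᵥ y)‖^2 ≤ (lam * ‖y‖)^2 := by
    rw [hP, mul_pow, hP y, Finset.mul_sum]
    apply Finset.sum_le_sum
    intro i _
    rw [hBy i, mul_pow]
    by_cases hi : i = i₀
    · subst hi; rw [hyi₀]; simp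
    · have := hgap i hi
      have h2 : μ i ^2 ≤ lam^2 := by nlinarith [abs_nonneg (μ i), sq_abs (μ i), le_abs_self (μ i)]
      nlinarith [sq_nonneg (⟪B i, y⟫ : ℝ)]
  have h1 : (0:ℝ) ≤ lam * ‖y‖ := mul_nonneg hlam (norm_nonneg _)
  nlinarith [norm_nonneg (toE (A *ᵥ y))]

lemma aux_step_norm {A : Matrix V V ℝ} (hA : A.IsHermitian) {i₀ : V} {lam dR : ℝ}
    (hone : A *ᵥ (fun _ => (1:ℝ)) = fun _ => dR)
    (hgap : ∀ i, i ≠ i₀ → |hA.eigenvalues i| ≤ lam)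
    (hlam : 0 ≤ lam) (hld : lam < dR) (hdR : 0 < dR)
    (ind : V → ℝ) (hind : ∀ v, ind v = 0 ∨ ind v = 1)
    (x : V → ℝ) :
    ‖toE (stepM A ind x)‖
      ≤ (lam + dR * (∑ v, ind v) / (Fintype.card V)) * ‖toE x‖ := by
  classical
  have hn : (0:ℝ) < Fintype.card V := by
    have : Nonempty V := ⟨i₀⟩
    exact_mod_cast Fintype.card_pos
  set n : ℝ := (Fintype.card V : ℝ)
  set s : ℝ := ∑ v, ind v with hs
  have hind_sq : ∀ v, ind v * ind v = ind v := by
    intro v; rcases hind v with h | h <;> rw [h] <;> ring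
  have hind_le : ∀ v, ind v ^ 2 ≤ 1 := by
    intro v; rcases hind v with h | h <;> rw [h] <;> norm_num
  have hs0 : 0 ≤ s := Finset.sum_nonneg fun v _ => by rcases hind v with h | h <;> simp [h]
  set z : EuclideanSpace ℝ V := toE (fun v => ind v * x v) with hz
  have hDcontr : ∀ w : V → ℝ, ‖toE (fun v => ind v * w v)‖ ≤ ‖toE w‖ := by
    intro w
    apply norm_le_normE
    apply Finset.sum_le_sum
    intro v _
    have : (toE (fun v => ind v * w v)) v = ind v * w v := rfl
    rw [this]
    have : (toE w) v = w v := rfl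
    rw [this, mul_pow]
    nlinarith [hind_le v, sq_nonneg (w v)]
  set t : ℝ := (∑ v, z v) / n with ht
  set y : EuclideanSpace ℝ V := toE (fun v => z v - t) with hy
  have hysum : ∑ v, y v = 0 := by
    have : ∑ v, y v = (∑ v, z v) - n * t := by
      simp [hy, toE, Finset.sum_sub_distrib, mul_comm]; exact Or.inl rfl
    rw [this, ht]; field_simp; ring
  have hzind : ∀ v, ind v * z v = z v := by
    intro v; show ind v * (ind v * x v) = ind v * x v
    rw [← mul_assoc, hind_sq]
  have hnorm_ind : ‖toE ind‖ = Real.sqrt s := norm_indE ind hind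
  have hsumz : ∑ v, z v = n * t := by
    rw [ht]; field_simp
  have hyz : ‖y‖ ≤ ‖z‖ := by
    apply norm_le_normE
    have e1 : ∑ v, (y v)^2 = ∑ v, ((z v)^2 - 2*t*(z v) + t^2) := by
      apply Finset.sum_congr rfl; intro v _; show (z v - t)^2 = _; ring
    have e2 : ∑ v, ((z v)^2 - 2*t*(z v) + t^2)
        = (∑ v, (z v)^2) - 2*t*(∑ v, z v) + n * t^2 := by
      rw [Finset.sum_add_distrib, Finset.sum_sub_distrib, ← Finset.mul_sum,
        Finset.sum_const, card_univ, nsmul_eq_mul]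
    rw [e1, e2, hsumz]
    nlinarith [sq_nonneg t, hn.le]
  have hzx : ‖z‖ ≤ ‖toE x‖ := hDcontr x
  have htb : |t| ≤ Real.sqrt s * ‖z‖ / n := by
    have h3 : ⟪toE ind, z⟫ = ∑ v, z v := by
      rw [innerE]
      exact Finset.sum_congr rfl fun v _ => hzind v
    have h4 : |∑ v, z v| ≤ Real.sqrt s * ‖z‖ := by
      rw [← h3, ← hnorm_ind]
      exact abs_real_inner_le_norm _ _
    rw [ht, abs_div, abs_of_pos hn]
    exact div_le_div_of_nonneg_right h4 hn.le
  have hzy : (fun v => z v) = fun v => y v + t := funext fun v => by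
    show z v = z v - t + t; ring
  have hAz : (A *ᵥ fun v => z v) = fun v => (A *ᵥ fun u => y u) v + t * dR := by
    rw [hzy]
    have e3 : (fun v => y v + t) = (fun v => y v) + t • (fun _ => (1:ℝ)) := by
      funext v; simp
    rw [e3, Matrix.mulVec_add, Matrix.mulVec_smul, hone]
    funext v; simp [smul_eq_mul]
  have hstep : stepM A ind x = (fun v => ind v * (A *ᵥ fun u => y u) v) + (t * dR) • ind := by
    funext v
    show ind v * (A *ᵥ fun u => ind u * x u) v = _
    have : (A *ᵥ fun u => ind u * x u) = (A *ᵥ fun v => z v) := rfl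
    rw [this, hAz]
    simp [smul_eq_mul]; ring
  have hsn : Real.sqrt s * Real.sqrt s = s := Real.mul_self_sqrt hs0
  calc ‖toE (stepM A ind x)‖
      ≤ ‖toE (fun v => ind v * (A *ᵥ fun u => y u) v)‖ + ‖(t * dR) • toE ind‖ := by
        rw [hstep]
        exact norm_add_le (toE (fun v => ind v * (A *ᵥ fun u => y u) v)) ((t * dR) • toE ind)
    _ ≤ lam * ‖z‖ + (Real.sqrt s * ‖z‖ / n) * (dR * Real.sqrt s) := by
        apply add_le_add
        · calc ‖toE (fun v => ind v * (A *ᵥ fun u => y u) v)‖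
              ≤ ‖toE (A *ᵥ fun u => y u)‖ := hDcontr _
            _ ≤ lam * ‖y‖ := aux_gap hA hone hgap hlam hld y hysum
            _ ≤ lam * ‖z‖ := by nlinarith
        · rw [norm_smul, hnorm_ind]
          have : ‖t * dR‖ = |t| * dR := by
            rw [norm_mul, Real.norm_eq_abs, Real.norm_eq_abs, abs_of_pos hdR]
          rw [this]
          calc |t| * dR * Real.sqrt s
              ≤ (Real.sqrt s * ‖z‖ / n) * dR * Real.sqrt s :=
                mul_le_mul_of_nonneg_right (mul_le_mul_of_nonneg_right htb hdR.le)
                  (Real.sqrt_nonneg s)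
            _ = (Real.sqrt s * ‖z‖ / n) * (dR * Real.sqrt s) := by ring
    _ = (lam + dR * s / n) * ‖z‖ := by
        field_simp
        linear_combination (dR * ‖z‖) * hsn
    _ ≤ (lam + dR * s / n) * ‖toE x‖ := by
        apply mul_le_mul_of_nonneg_left hzx
        positivity

lemma aux_iter_norm {A : Matrix V V ℝ} (hA : A.IsHermitian) {i₀ : V} {lam dR : ℝ}
    (hone : A *ᵥ (fun _ => (1:ℝ)) = fun _ => dR)
    (hgap : ∀ i, i ≠ i₀ → |hA.eigenvalues i| ≤ lam)
    (hlam : 0 ≤ lam) (hld : lam < dR) (hdR : 0 < dR)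
    (ind : V → ℝ) (hind : ∀ v, ind v = 0 ∨ ind v = 1)
    (m : ℕ) (x : V → ℝ) :
    ‖toE ((stepM A ind)^[m] x)‖
      ≤ (lam + dR * (∑ v, ind v) / (Fintype.card V))^m * ‖toE x‖ := by
  have hs0 : 0 ≤ ∑ v, ind v :=
    Finset.sum_nonneg fun v _ => by rcases hind v with h | h <;> simp [h]
  have hn0 : (0:ℝ) ≤ Fintype.card V := by positivity
  have hc : 0 ≤ lam + dR * (∑ v, ind v) / (Fintype.card V) := by positivity
  induction m with
  | zero => simp
  | succ m ihm =>
    rw [Function.iterate_succ_apply']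
    calc ‖toE (stepM A ind ((stepM A ind)^[m] x))‖
        ≤ (lam + dR * (∑ v, ind v) / (Fintype.card V)) * ‖toE ((stepM A ind)^[m] x)‖ :=
          aux_step_norm hA hone hgap hlam hld hdR ind hind _
      _ ≤ (lam + dR * (∑ v, ind v) / (Fintype.card V)) *
            ((lam + dR * (∑ v, ind v) / (Fintype.card V))^m * ‖toE x‖) :=
          mul_le_mul_of_nonneg_left ihm hc
      _ = (lam + dR * (∑ v, ind v) / (Fintype.card V))^(m+1) * ‖toE x‖ := by ring

omit [DecidableEq V] in
lemma iter_absorb (A : Matrix V V ℝ) (ind : V → ℝ) (hind : ∀ v, ind v = 0 ∨ ind v = 1)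
    (m : ℕ) (v : V) :
    ind v * (stepM A ind)^[m] ind v = (stepM A ind)^[m] ind v := by
  have hsq : ind v * ind v = ind v := by rcases hind v with h | h <;> rw [h] <;> ring
  cases m with
  | zero => exact hsq
  | succ m =>
    rw [Function.iterate_succ_apply']
    show ind v * (ind v * _) = ind v * _
    rw [← mul_assoc, hsq]

lemma walkSum (A : Matrix V V ℝ) (ind : V → ℝ) (hind : ∀ v, ind v = 0 ∨ ind v = 1) :
    ∀ (m : ℕ) (u : V),
      (∑ w : Fin (m+1) → V,
        if w 0 = u then
          (∏ k : Fin m, A (w k.castSucc) (w k.succ)) * (∏ k, ind (w k))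
        else 0)
      = (stepM A ind)^[m] ind u := by
  intro m
  induction m with
  | zero =>
    intro u
    show _ = ind u
    rw [← (Fintype.sum_equiv (Equiv.funUnique (Fin 1) V).symm
      (fun v => if v = u then ind v else 0)
      (fun w => if w 0 = u then
          (∏ k : Fin 0, A (w k.castSucc) (w k.succ)) * (∏ k, ind (w k)) else 0)
      (fun v => by simp [Equiv.funUnique]))]
    simp
  | succ m ih =>
    intro u
    rw [Function.iterate_succ_apply']
    have rhs1 : stepM A ind ((stepM A ind)^[m] ind) u
        = ind u * ∑ x, A u x * (stepM A ind)^[m] ind x := by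
      show ind u * (A *ᵥ fun x => ind x * _) u = _
      congr 1
      simp only [Matrix.mulVec, dotProduct]
      exact Finset.sum_congr rfl fun x _ => by rw [iter_absorb A ind hind m x]
    rw [rhs1]
    rw [← (Fintype.sum_equiv (Fin.consEquiv (fun _ : Fin (m+2) => V))
      (fun p : V × (Fin (m+1) → V) =>
        if p.1 = u then
          (A p.1 (p.2 0) * ∏ k : Fin m, A (p.2 k.castSucc) (p.2 k.succ))
            * (ind p.1 * ∏ k, ind (p.2 k))
        else 0)
      (fun w => if w 0 = u then
          (∏ k : Fin (m+1), A (w k.castSucc) (w k.succ)) * (∏ k, ind (w k)) else 0)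
      (fun p => by
        obtain ⟨v, w'⟩ := p
        dsimp only
        have he : (Fin.consEquiv (fun _ : Fin (m+2) => V)) (v, w') = Fin.cons v w' := rfl
        rw [he]
        have h0 : (Fin.cons v w' : Fin (m+2) → V) 0 = v := rfl
        have hp1 : (∏ k : Fin (m+1), A ((Fin.cons v w' : Fin (m+2) → V) k.castSucc)
              ((Fin.cons v w' : Fin (m+2) → V) k.succ))
            = A v (w' 0) * ∏ k : Fin m, A (w' k.castSucc) (w' k.succ) := by
          rw [Fin.prod_univ_succ]
          simp [← Fin.succ_castSucc, Fin.cons_succ, Fin.castSucc_zero, Fin.cons_zero]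
        have hp2 : (∏ k : Fin (m+2), ind ((Fin.cons v w' : Fin (m+2) → V) k))
            = ind v * ∏ k : Fin (m+1), ind (w' k) := by
          rw [Fin.prod_univ_succ]
          simp [Fin.cons_succ, Fin.cons_zero]
        rw [h0, hp1, hp2]))]
    rw [Fintype.sum_prod_type]
    dsimp only
    rw [Finset.sum_comm]
    rw [show (∑ y : Fin (m+1) → V, ∑ x : V, if x = u then
          (A x (y 0) * ∏ k : Fin m, A (y k.castSucc) (y k.succ))
            * (ind x * ∏ k, ind (y k)) else 0)
        = ∑ y : Fin (m+1) → V, (A u (y 0) * ∏ k : Fin m, A (y k.castSucc) (y k.succ))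
            * (ind u * ∏ k, ind (y k)) from
      Finset.sum_congr rfl fun y _ => by rw [Finset.sum_ite_eq' Finset.univ u]; simp]
    have key : (∑ x, A u x * (stepM A ind)^[m] ind x)
        = ∑ w' : Fin (m+1) → V, A u (w' 0) *
            ((∏ k : Fin m, A (w' k.castSucc) (w' k.succ)) * ∏ k, ind (w' k)) := by
      calc (∑ x, A u x * (stepM A ind)^[m] ind x)
          = ∑ x, ∑ w' : Fin (m+1) → V, (if w' 0 = x then A u x *
              ((∏ k : Fin m, A (w' k.castSucc) (w' k.succ)) * ∏ k, ind (w' k)) else 0) :=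
            Finset.sum_congr rfl fun x _ => by
              rw [← ih x, Finset.mul_sum]
              exact Finset.sum_congr rfl fun w' _ => by rw [mul_ite, mul_zero]
        _ = ∑ w' : Fin (m+1) → V, ∑ x, (if w' 0 = x then A u x *
              ((∏ k : Fin m, A (w' k.castSucc) (w' k.succ)) * ∏ k, ind (w' k)) else 0) :=
            Finset.sum_comm
        _ = _ := Finset.sum_congr rfl fun w' _ => by
              rw [Finset.sum_ite_eq]
              simp
    rw [key, Finset.mul_sum]
    exact Finset.sum_congr rfl fun w' _ => by ring

end Aux

set_option maxHeartbeats 1000000 in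
/-- Expander walk bound: let `X` be a `d`-regular graph on a finite vertex set `V` whose
adjacency matrix has largest eigenvalue `d` (attained at index `i₀`) and all other
eigenvalues of absolute value at most `λ`, with `λ/d < ε/4` for some `ε ∈ (0,1)`. Let
`S ⊆ V` with `|S| < (1−ε)·|V|`, let `δ ∈ (0,1)`, and let `ρ` be a positive integer with
`ρ ≥ (2/ε)·ln(1/δ)`. Then the number of walks `(v₁, …, v_ρ)` in `X` that stay entirely
inside `S` is less than `δ·|V|·d^(ρ−1)`; equivalently, a uniformly random `(ρ−1)`-step
walk in `X` stays inside `S` with probability less than `δ`. -/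
theorem stmt_13 {V : Type*} [Fintype V] [DecidableEq V]
    (X : SimpleGraph V) [DecidableRel X.Adj]
    (d : ℕ) (hd : 0 < d) (hreg : X.IsRegularOfDegree d)
    (lam ε δ : ℝ) (hε : ε ∈ Set.Ioo (0 : ℝ) 1) (hδ : δ ∈ Set.Ioo (0 : ℝ) 1)
    (hA : (X.adjMatrix ℝ).IsHermitian)
    (i₀ : V) (hmax : hA.eigenvalues i₀ = d)
    (hgap : ∀ i : V, i ≠ i₀ → |hA.eigenvalues i| ≤ lam)
    (hld : lam / d < ε / 4)
    (S : Set V) (hS : (S.ncard : ℝ) < (1 - ε) * Fintype.card V)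
    (ρ : ℕ) (hρ : 0 < ρ) (hρ2 : (ρ : ℝ) ≥ 2 / ε * Real.log (1 / δ)) :
    ({w : Fin ρ → V |
        (∀ (k : ℕ) (h : k + 1 < ρ),
          X.Adj (w ⟨k, Nat.lt_of_succ_lt h⟩) (w ⟨k + 1, h⟩)) ∧
        ∀ k : Fin ρ, w k ∈ S}.ncard : ℝ)
      < δ * Fintype.card V * d ^ (ρ - 1) := by
  classical
  obtain ⟨m, rfl⟩ : ∃ m, ρ = m + 1 := ⟨ρ - 1, (Nat.succ_pred_eq_of_pos hρ).symm⟩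
  obtain ⟨hε0, hε1⟩ := hε
  obtain ⟨hδ0, hδ1⟩ := hδ
  set A : Matrix V V ℝ := X.adjMatrix ℝ with hAdef
  set ind : V → ℝ := fun v => if v ∈ S then 1 else 0 with hinddef
  have hind : ∀ v, ind v = 0 ∨ ind v = 1 := fun v => by
    by_cases h : v ∈ S <;> simp [hinddef, h]
  set dR : ℝ := (d : ℝ) with hdRdef
  have hdR : (0:ℝ) < dR := by rw [hdRdef]; exact_mod_cast hd
  set n : ℝ := (Fintype.card V : ℝ) with hndef
  have hn : (0:ℝ) < n := by
    have : Nonempty V := ⟨i₀⟩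
    rw [hndef]; exact_mod_cast Fintype.card_pos
  have hone : A *ᵥ (fun _ => (1:ℝ)) = fun _ => dR := by
    funext v
    show (X.adjMatrix ℝ *ᵥ Function.const V 1) v = dR
    rw [SimpleGraph.adjMatrix_mulVec_const_apply_of_regular hreg, hdRdef, mul_one]
  -- lam ≥ 0
  have hcard1 : 1 < Fintype.card V := by
    have h1 : X.degree i₀ < Fintype.card V := X.degree_lt_card_verts i₀
    have h2 : X.degree i₀ = d := hreg i₀
    omega
  have hlam : 0 ≤ lam := by
    obtain ⟨j, hj⟩ := Fintype.exists_ne_of_one_lt_card hcard1 i₀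
    exact (abs_nonneg _).trans (hgap j hj)
  have hlamd : lam < ε / 4 * dR := by
    have := (div_lt_iff₀ hdR).mp hld
    linarith
  have hld2 : lam < dR := by nlinarith
  -- counting
  set wt : (Fin (m+1) → V) → ℝ := fun w =>
    (∏ k : Fin m, A (w k.castSucc) (w k.succ)) * (∏ k, ind (w k)) with hwt
  set P : (Fin (m+1) → V) → Prop := fun w =>
    (∀ (k : ℕ) (h : k + 1 < m + 1),
      X.Adj (w ⟨k, Nat.lt_of_succ_lt h⟩) (w ⟨k + 1, h⟩)) ∧ ∀ k : Fin (m+1), w k ∈ S with hP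
  have hncard : ({w : Fin (m+1) → V | P w}.ncard : ℝ)
      = ∑ w : Fin (m+1) → V, if P w then (1:ℝ) else 0 := by
    rw [Set.ncard_eq_toFinset_card', Set.toFinset_setOf]
    rw [Finset.card_filter]
    push_cast
    exact Finset.sum_congr rfl fun w _ => by split_ifs <;> simp
  have hPwt : ∀ w : Fin (m+1) → V, (if P w then (1:ℝ) else 0) = wt w := by
    intro w
    have e1 : (∏ k : Fin m, A (w k.castSucc) (w k.succ))
        = if (∀ k : Fin m, X.Adj (w k.castSucc) (w k.succ)) then (1:ℝ) else 0 := by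
      by_cases h : ∀ k : Fin m, X.Adj (w k.castSucc) (w k.succ)
      · rw [if_pos h]
        apply Finset.prod_eq_one
        intro k _
        simp [hAdef, h k]
      · rw [if_neg h]
        push_neg at h
        obtain ⟨k, hk⟩ := h
        apply Finset.prod_eq_zero (Finset.mem_univ k)
        simp [hAdef, hk]
    have e2 : (∏ k : Fin (m+1), ind (w k))
        = if (∀ k : Fin (m+1), w k ∈ S) then (1:ℝ) else 0 := by
      by_cases h : ∀ k : Fin (m+1), w k ∈ S
      · rw [if_pos h]
        apply Finset.prod_eq_one
        intro k _
        simp [hinddef, h k]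
      · rw [if_neg h]
        push_neg at h
        obtain ⟨k, hk⟩ := h
        apply Finset.prod_eq_zero (Finset.mem_univ k)
        simp [hinddef, hk]
    have hiff : P w ↔ (∀ k : Fin m, X.Adj (w k.castSucc) (w k.succ))
        ∧ (∀ k : Fin (m+1), w k ∈ S) := by
      constructor
      · rintro ⟨h1, h2⟩
        refine ⟨fun k => ?_, h2⟩
        have := h1 k.val (by omega)
        convert this using 2 <;> exact Fin.ext (by simp)
      · rintro ⟨h1, h2⟩
        refine ⟨fun k hk => ?_, h2⟩
        have := h1 ⟨k, by omega⟩
        convert this using 2 <;> exact Fin.ext (by simp)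
    show _ = (∏ k : Fin m, A (w k.castSucc) (w k.succ)) * (∏ k, ind (w k))
    rw [e1, e2]
    by_cases hp : P w
    · rw [if_pos hp]
      obtain ⟨h1, h2⟩ := hiff.mp hp
      rw [if_pos (by simpa using h1), if_pos (by simpa using h2)]
      norm_num
    · rw [if_neg hp]
      rw [hiff] at hp
      push_neg at hp
      by_cases h1 : ∀ k : Fin m, X.Adj (w k.castSucc) (w k.succ)
      · rw [if_pos (by simpa using h1), if_neg (by simpa using hp h1)]
        norm_num
      · rw [if_neg (by simpa using h1)]
        norm_num
  -- total sum equals sums of iterates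
  have htot : (∑ w : Fin (m+1) → V, wt w) = ∑ u, (stepM A ind)^[m] ind u := by
    calc (∑ w : Fin (m+1) → V, wt w)
        = ∑ w : Fin (m+1) → V, ∑ u, (if w 0 = u then wt w else 0) :=
          Finset.sum_congr rfl fun w _ => by rw [Finset.sum_ite_eq]; simp
      _ = ∑ u, ∑ w : Fin (m+1) → V, (if w 0 = u then wt w else 0) := Finset.sum_comm
      _ = ∑ u, (stepM A ind)^[m] ind u :=
          Finset.sum_congr rfl fun u _ => walkSum A ind hind m u
  -- spectral bound
  set s : ℝ := ∑ v, ind v with hsdef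
  have hs0 : 0 ≤ s := Finset.sum_nonneg fun v _ => by rcases hind v with h | h <;> simp [h]
  have hsncard : s = (S.ncard : ℝ) := by
    have h1 : S.ncard = (Finset.univ.filter (· ∈ S)).card := by
      rw [Set.ncard_eq_toFinset_card']
      congr 1
      ext v
      simp [Set.mem_toFinset]
    rw [h1, Finset.card_filter]
    push_cast
    exact Finset.sum_congr rfl fun v _ => by split_ifs <;> simp [hinddef, *]
  set c : ℝ := lam + dR * s / n with hcdef
  have hbound : (∑ u, (stepM A ind)^[m] ind u) ≤ c^m * s := by
    have habs : ∀ u, ind u * (stepM A ind)^[m] ind u = (stepM A ind)^[m] ind u :=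
      iter_absorb A ind hind m
    have hinner : ⟪toE ind, toE ((stepM A ind)^[m] ind)⟫ = ∑ u, (stepM A ind)^[m] ind u := by
      rw [innerE]
      exact Finset.sum_congr rfl fun u _ => habs u
    rw [← hinner]
    calc ⟪toE ind, toE ((stepM A ind)^[m] ind)⟫
        ≤ ‖toE ind‖ * ‖toE ((stepM A ind)^[m] ind)‖ := real_inner_le_norm _ _
      _ ≤ ‖toE ind‖ * (c^m * ‖toE ind‖) := by
          apply mul_le_mul_of_nonneg_left _ (norm_nonneg _)
          exact aux_iter_norm hA hone hgap hlam hld2 hdR ind hind m ind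
      _ = c^m * (‖toE ind‖ * ‖toE ind‖) := by ring
      _ = c^m * s := by
          rw [norm_indE ind hind, Real.mul_self_sqrt hs0]
  -- arithmetic
  have hslt : s < (1 - ε) * n := by rw [hsncard]; exact hS
  have hc0 : 0 ≤ c := by positivity
  set β : ℝ := (1 - ε) * dR + lam with hβdef
  have hcβ : c ≤ β := by
    have h1 : dR * s / n ≤ (1 - ε) * dR := by
      rw [div_le_iff₀ hn]
      nlinarith
    rw [hcdef, hβdef]
    linarith
  have hβpos : 0 < β := by rw [hβdef]; nlinarith
  set γ : ℝ := (1 - 3/4 * ε) * dR with hγdef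
  have hβγ : β ≤ γ := by rw [hβdef, hγdef]; nlinarith
  have hγfac : 0 ≤ 1 - 3/4 * ε := by nlinarith
  have hexp : (1 - 3/4 * ε) ^ (m+1) ≤ δ := by
    have h1 : 1 - 3/4 * ε ≤ Real.exp (-(3/4 * ε)) := by
      have := Real.add_one_le_exp (-(3/4 * ε))
      linarith
    have h2 : (1 - 3/4 * ε) ^ (m+1) ≤ Real.exp (-(3/4 * ε)) ^ (m+1) :=
      pow_le_pow_left₀ hγfac h1 _
    have h3 : Real.exp (-(3/4 * ε)) ^ (m+1) = Real.exp (-(3/4 * ε) * (m+1)) := by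
      rw [← Real.exp_nat_mul]
      congr 1
      push_cast
      ring
    have hlog : Real.log (1/δ) = -Real.log δ := by
      rw [one_div, Real.log_inv]
    have hlogδ : Real.log δ < 0 := Real.log_neg hδ0 hδ1
    have h4 : -(3/4 * ε) * (m+1) ≤ Real.log δ := by
      have h5 : ((m:ℝ)+1) ≥ 2 / ε * (-Real.log δ) := by
        rw [← hlog]; exact_mod_cast hρ2
      have h6 : 2 * (-Real.log δ) ≤ ε * ((m:ℝ)+1) := by
        calc 2 * (-Real.log δ) = ε * (2 / ε * (-Real.log δ)) := by
              field_simp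
          _ ≤ ε * ((m:ℝ)+1) := mul_le_mul_of_nonneg_left h5 hε0.le
      nlinarith
    have h7 : Real.exp (-(3/4 * ε) * (m+1)) ≤ δ := by
      calc Real.exp (-(3/4 * ε) * (m+1)) ≤ Real.exp (Real.log δ) :=
            Real.exp_le_exp.mpr h4
        _ = δ := Real.exp_log hδ0
    calc (1 - 3/4 * ε) ^ (m+1) ≤ Real.exp (-(3/4 * ε)) ^ (m+1) := h2
      _ = Real.exp (-(3/4 * ε) * (m+1)) := h3
      _ ≤ δ := h7
  -- final chain
  have hfinal : (({w : Fin (m+1) → V | P w}.ncard : ℝ)) < δ * n * dR ^ m := by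
    have e0 : ({w : Fin (m+1) → V | P w}.ncard : ℝ) = ∑ w : Fin (m+1) → V, wt w := by
      rw [hncard]
      exact Finset.sum_congr rfl fun w _ => hPwt w
    rw [e0, htot]
    calc (∑ u, (stepM A ind)^[m] ind u)
        ≤ c^m * s := hbound
      _ ≤ β^m * s := mul_le_mul_of_nonneg_right (pow_le_pow_left₀ hc0 hcβ m) hs0
      _ < β^m * ((1 - ε) * n) := mul_lt_mul_of_pos_left hslt (pow_pos hβpos m)
      _ ≤ γ^m * ((1 - 3/4 * ε) * n) := by
          apply mul_le_mul
          · exact pow_le_pow_left₀ hβpos.le hβγ m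
          · nlinarith
          · nlinarith
          · positivity
      _ = (1 - 3/4 * ε)^(m+1) * n * dR^m := by
          rw [hγdef, mul_pow]
          ring
      _ ≤ δ * n * dR^m := by
          apply mul_le_mul_of_nonneg_right _ (by positivity)
          exact mul_le_mul_of_nonneg_right hexp hn.le
  have hmm : m + 1 - 1 = m := rfl
  calc (({w : Fin (m+1) → V |
        (∀ (k : ℕ) (h : k + 1 < m + 1),
          X.Adj (w ⟨k, Nat.lt_of_succ_lt h⟩) (w ⟨k + 1, h⟩)) ∧
        ∀ k : Fin (m+1), w k ∈ S}.ncard : ℝ))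
      = ({w : Fin (m+1) → V | P w}.ncard : ℝ) := rfl
    _ < δ * n * dR ^ m := hfinal
    _ = δ * Fintype.card V * d ^ (m + 1 - 1) := by rw [hmm, hndef, hdRdef]
end
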